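/- arXiv:2505.05969 — 7 statements merged into one kernel-verified Lean document; each statement's English description precedes it below -/
import Mathlib

section
/- For vectors v, w in R^n, there exists N such that either ||v||_p ≤ ||w||_p for all p ≥ N, or ||w||_p ≤ ||v||_p for all p ≥ N. -/
open Finset Filter

private lemma aux_pos (s : Finset ℝ) (c : ℝ → ℝ) (M cM : ℝ) (hM : 0 < M) (hcM : 0 < cM)
    (hx : ∀ x ∈ s, 0 ≤ x ∧ x < M) :
    ∃ N : ℕ, ∀ p : ℕ, N ≤ p → 0 < cM * M ^ p + ∑ x ∈ s, c x * x ^ p := by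
  set r : ℝ := if h : s.Nonempty then s.max' h else 0 with hrdef
  have hr0 : 0 ≤ r := by
    rw [hrdef]; split_ifs with h
    · exact (hx _ (s.max'_mem h)).1
    · exact le_refl 0
  have hrM : r < M := by
    rw [hrdef]; split_ifs with h
    · exact (hx _ (s.max'_mem h)).2
    · exact hM
  have hxr : ∀ x ∈ s, x ≤ r := by
    intro x hxs
    rw [hrdef, dif_pos ⟨x, hxs⟩]
    exact s.le_max' x hxs
  set C : ℝ := ∑ x ∈ s, |c x| with hCdef
  have hbound : ∀ p : ℕ, |∑ x ∈ s, c x * x ^ p| ≤ C * r ^ p := by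
    intro p
    calc |∑ x ∈ s, c x * x ^ p| ≤ ∑ x ∈ s, |c x * x ^ p| := abs_sum_le_sum_abs _ _
    _ ≤ ∑ x ∈ s, |c x| * r ^ p := by
        apply sum_le_sum; intro x hxs
        rw [abs_mul, abs_pow, abs_of_nonneg (hx x hxs).1]
        exact mul_le_mul_of_nonneg_left (pow_le_pow_left₀ (hx x hxs).1 (hxr x hxs) p)
          (abs_nonneg _)
    _ = C * r ^ p := by rw [← sum_mul]
  have htend : Tendsto (fun p : ℕ => C * (r / M) ^ p) atTop (nhds 0) := by
    have h1 := tendsto_pow_atTop_nhds_zero_of_lt_one (div_nonneg hr0 hM.le)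
      ((div_lt_one hM).2 hrM)
    simpa using h1.const_mul C
  have hev : ∀ᶠ p in atTop, C * (r / M) ^ p < cM := htend.eventually_lt_const hcM
  obtain ⟨N, hN⟩ := eventually_atTop.1 hev
  refine ⟨N, fun p hp => ?_⟩
  have hMp : (0:ℝ) < M ^ p := pow_pos hM p
  have h1 : C * r ^ p < cM * M ^ p := by
    have h2 := hN p hp
    rw [div_pow] at h2
    have h3 := mul_lt_mul_of_pos_right h2 hMp
    calc C * r ^ p = C * (r ^ p / M ^ p) * M ^ p := by field_simp
    _ < cM * M ^ p := h3
  have h4 := (abs_le.1 (hbound p)).1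
  linarith

private lemma key : ∀ (s : Finset ℝ), (∀ x ∈ s, 0 ≤ x) → ∀ c : ℝ → ℝ,
    ∃ N : ℕ, (∀ p : ℕ, N ≤ p → 0 ≤ ∑ x ∈ s, c x * x ^ p) ∨
      (∀ p : ℕ, N ≤ p → ∑ x ∈ s, c x * x ^ p ≤ 0) := by
  intro s
  induction s using Finset.strongInduction with
  | _ s ih =>
    intro hs c
    by_cases hne : s.Nonempty
    · set M := s.max' hne with hMdef
      have hMmem : M ∈ s := s.max'_mem hne
      have hM0 : 0 ≤ M := hs M hMmem
      by_cases hMpos : 0 < M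
      · have herase : ∀ x ∈ s.erase M, 0 ≤ x ∧ x < M := by
          intro x hxs
          exact ⟨hs x (mem_of_mem_erase hxs),
            lt_of_le_of_ne (s.le_max' x (mem_of_mem_erase hxs)) (ne_of_mem_erase hxs)⟩
        have hsplit : ∀ p : ℕ, ∑ x ∈ s, c x * x ^ p
            = c M * M ^ p + ∑ x ∈ s.erase M, c x * x ^ p := by
          intro p
          exact (Finset.add_sum_erase s _ hMmem).symm
        rcases lt_trichotomy (c M) 0 with hcM | hcM | hcM
        · obtain ⟨N, hN⟩ := aux_pos (s.erase M) (fun x => -c x) M (-c M) hMpos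
            (by linarith) herase
          refine ⟨N, Or.inr fun p hp => ?_⟩
          have := hN p hp
          simp only [neg_mul, Finset.sum_neg_distrib] at this
          rw [hsplit p]
          linarith
        · -- c M = 0 : reduce to erase
          obtain ⟨N, hN⟩ := ih (s.erase M) (Finset.erase_ssubset hMmem)
            (fun x hx => hs x (mem_of_mem_erase hx)) c
          refine ⟨N, ?_⟩
          rcases hN with h | h
          · left; intro p hp; rw [hsplit p, hcM]; simpa using h p hp
          · right; intro p hp; rw [hsplit p, hcM]; simpa using h p hp
        · obtain ⟨N, hN⟩ := aux_pos (s.erase M) c M (c M) hMpos hcM herase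
          refine ⟨N, Or.inl fun p hp => ?_⟩
          rw [hsplit p]
          linarith [hN p hp]
      · -- M = 0, so every element of s is 0
        have hM : M = 0 := le_antisymm (not_lt.1 hMpos) hM0
        refine ⟨1, Or.inl fun p hp => ?_⟩
        have : ∀ x ∈ s, c x * x ^ p = 0 := by
          intro x hxs
          have hx0 : x = 0 := le_antisymm (hM ▸ s.le_max' x hxs) (hs x hxs)
          rw [hx0, zero_pow (by omega), mul_zero]
        rw [Finset.sum_congr rfl this]
        simp
    · refine ⟨0, Or.inl fun p _ => ?_⟩
      rw [Finset.not_nonempty_iff_eq_empty.1 hne]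
      simp

/-- The `L^p` norm on `ℝ^n` for an integer exponent `p`. -/
noncomputable def lpNorm {n : ℕ} (p : ℕ) (x : Fin n → ℝ) : ℝ :=
  (∑ i, |x i| ^ p) ^ ((1 : ℝ) / p)

private lemma sum_group {n : ℕ} (u : Fin n → ℝ) (s : Finset ℝ)
    (hmem : ∀ i, |u i| ∈ s) (p : ℕ) :
    ∑ i, |u i| ^ p = ∑ x ∈ s, ((univ.filter (fun i => |u i| = x)).card : ℝ) * x ^ p := by
  rw [← Finset.sum_fiberwise_of_maps_to (fun i _ => hmem i) (fun i => |u i| ^ p)]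
  refine Finset.sum_congr rfl fun x hxs => ?_
  rw [Finset.sum_congr rfl (fun i hi => by
    rw [(Finset.mem_filter.1 hi).2]), Finset.sum_const, nsmul_eq_mul]

/-- For vectors `v, w ∈ ℝ^n`, there is `N` such that either `‖v‖_p ≤ ‖w‖_p` for all `p ≥ N`,
or `‖w‖_p ≤ ‖v‖_p` for all `p ≥ N`. -/
theorem eventually_lpNorm_le_or_ge {n : ℕ} (v w : Fin n → ℝ) :
    ∃ N : ℕ, (∀ p : ℕ, N ≤ p → lpNorm p v ≤ lpNorm p w) ∨
      (∀ p : ℕ, N ≤ p → lpNorm p w ≤ lpNorm p v) := by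
  classical
  set s : Finset ℝ := univ.image (fun i => |v i|) ∪ univ.image (fun i => |w i|) with hsdef
  have hvmem : ∀ i, |v i| ∈ s := fun i =>
    Finset.mem_union_left _ (Finset.mem_image_of_mem _ (Finset.mem_univ i))
  have hwmem : ∀ i, |w i| ∈ s := fun i =>
    Finset.mem_union_right _ (Finset.mem_image_of_mem _ (Finset.mem_univ i))
  have hs : ∀ x ∈ s, 0 ≤ x := by
    intro x hx
    rw [hsdef, Finset.mem_union] at hx
    rcases hx with h | h <;>
    · obtain ⟨i, _, rfl⟩ := Finset.mem_image.1 h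
      exact abs_nonneg _
  set cv : ℝ → ℝ := fun x => ((univ.filter (fun i => |v i| = x)).card : ℝ)
  set cw : ℝ → ℝ := fun x => ((univ.filter (fun i => |w i| = x)).card : ℝ)
  obtain ⟨N, hN⟩ := key s hs (fun x => cw x - cv x)
  have hdiff : ∀ p : ℕ, ∑ x ∈ s, (cw x - cv x) * x ^ p
      = (∑ i, |w i| ^ p) - (∑ i, |v i| ^ p) := by
    intro p
    rw [sum_group v s hvmem p, sum_group w s hwmem p]
    rw [← Finset.sum_sub_distrib]
    exact Finset.sum_congr rfl fun x _ => by ring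
  have hmono : ∀ p : ℕ, (∑ i, |v i| ^ p) ≤ (∑ i, |w i| ^ p) → lpNorm p v ≤ lpNorm p w := by
    intro p h
    unfold lpNorm
    apply Real.rpow_le_rpow (by positivity) h (by positivity)
  have hmono' : ∀ p : ℕ, (∑ i, |w i| ^ p) ≤ (∑ i, |v i| ^ p) → lpNorm p w ≤ lpNorm p v := by
    intro p h
    unfold lpNorm
    apply Real.rpow_le_rpow (by positivity) h (by positivity)
  refine ⟨N, ?_⟩
  rcases hN with h | h
  · left; intro p hp
    apply hmono
    have := h p hp
    rw [hdiff p] at this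
    linarith
  · right; intro p hp
    apply hmono'
    have := h p hp
    rw [hdiff p] at this
    linarith
end

section
/- For a connected edge-weighted graph (G,ω) with finitely many spanning trees, there exists a single spanning tree T that simultaneously minimizes the L^p spanning tree congestion for all sufficiently large integers p and for p = ∞. -/
open Classical

noncomputable section CongestionDefs

variable {V : Type*} [Fintype V] [DecidableEq V]

/-- Weighted congestion of an edge `e` of a spanning tree `T` of `G`: total weight of
edges of `G` whose endpoints are separated in `T` with `e` removed. -/
def edgeCongestion (G T : SimpleGraph V) (ω : Sym2 V → ℝ) (e : Sym2 V) : ℝ :=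
  ∑ f : Sym2 V,
    if f ∈ G.edgeSet ∧ ∃ a b : V, f = s(a, b) ∧ ¬ (T.deleteEdges {e}).Reachable a b
    then ω f else 0

/-- The `L^p` congestion of a spanning tree `T` (for a natural `p ≥ 1`). -/
def treeCong (G T : SimpleGraph V) (ω : Sym2 V → ℝ) (p : ℕ) : ℝ :=
  (∑ e : Sym2 V, if e ∈ T.edgeSet then (edgeCongestion G T ω e) ^ p else 0) ^ ((1 : ℝ) / p)

/-- The `L^∞` congestion of a spanning tree `T`. -/
def treeCongTop (G T : SimpleGraph V) (ω : Sym2 V → ℝ) : ℝ :=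
  ⨆ e ∈ T.edgeSet, edgeCongestion G T ω e

/-- `T` is a spanning tree of `G`. -/
def IsSpanningTree (G T : SimpleGraph V) : Prop := T ≤ G ∧ T.IsTree

/-- The `L^p` spanning tree congestion of `(G, ω)`. -/
def graphCong (G : SimpleGraph V) (ω : Sym2 V → ℝ) (p : ℕ) : ℝ :=
  sInf {x | ∃ T : SimpleGraph V, IsSpanningTree G T ∧ treeCong G T ω p = x}

/-- The `L^∞` spanning tree congestion of `(G, ω)`. -/
def graphCongTop (G : SimpleGraph V) (ω : Sym2 V → ℝ) : ℝ :=
  sInf {x | ∃ T : SimpleGraph V, IsSpanningTree G T ∧ treeCongTop G T ω = x}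

/-- Total weight of (the edges of) a graph. -/
def totalWeight (T : SimpleGraph V) (ρ : Sym2 V → ℝ) : ℝ :=
  ∑ e : Sym2 V, if e ∈ T.edgeSet then ρ e else 0

end CongestionDefs

/-!
Order the spanning trees by the germ at `p → ∞` of the power sums `∑ₑ c(e)ᵖ` of their edge
congestions. Grouping equal congestions, the difference of two such power sums is an exponential
sum `∑ₓ nₓ xᵖ` with nonnegative bases, whose sign is eventually that of the coefficient of the
largest base; so this preorder is total and, there being finitely many spanning trees, it has a
least element `T`. Taking `p`-th roots, `T` minimizes `C_p` for all large `p`, and since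
`max c ≤ (∑ cᵖ)^{1/p} ≤ (#E)^{1/p} max c`, it also minimizes `C_∞`.
-/

open Filter Finset Topology

section PowerSums

lemma eventually_nonneg_or_nonpos_sum_mul_pow (F : Finset ℝ) (c : ℝ → ℝ)
    (hF : ∀ x ∈ F, 0 ≤ x) :
    (∀ᶠ p : ℕ in atTop, 0 ≤ ∑ x ∈ F, c x * x ^ p) ∨
      (∀ᶠ p : ℕ in atTop, ∑ x ∈ F, c x * x ^ p ≤ 0) := by
  set P := F.filter fun x => c x ≠ 0 ∧ x ≠ 0
  have hFP : ∀ p ≠ 0, ∑ x ∈ F, c x * x ^ p = ∑ x ∈ P, c x * x ^ p := fun p hp =>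
    (sum_filter_of_ne fun x _ h =>
      ⟨left_ne_zero_of_mul h, ne_zero_pow hp (right_ne_zero_of_mul h)⟩).symm
  rcases P.eq_empty_or_nonempty with hP | hP
  · left
    filter_upwards [eventually_ne_atTop 0] with p hp
    simp [hFP p hp, hP]
  set M := P.max' hP
  have hMP : M ∈ P := P.max'_mem hP
  obtain ⟨hMF, hcM, hM0⟩ := mem_filter.1 hMP
  have hM : 0 < M := (hF M hMF).lt_of_ne' hM0
  have hscale : ∀ p : ℕ, ∑ x ∈ P, c x * x ^ p = M ^ p * ∑ x ∈ P, c x * (x / M) ^ p := by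
    intro p
    rw [mul_sum]
    refine sum_congr rfl fun x _ => ?_
    rw [div_pow, mul_div_assoc', mul_div_cancel₀ _ (pow_ne_zero p hM.ne')]
  have hlim : Tendsto (fun p : ℕ => ∑ x ∈ P, c x * (x / M) ^ p) atTop (𝓝 (c M)) := by
    rw [show c M = ∑ x ∈ P, if x = M then c x else 0 by rw [sum_ite_eq', if_pos hMP]]
    refine tendsto_finsetSum _ fun x hx => ?_
    split_ifs with hxM
    · simp [hxM, div_self hM.ne']
    · have hxM' : x < M := (P.le_max' x hx).lt_of_ne hxM
      simpa using (tendsto_pow_atTop_nhds_zero_of_lt_one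
        (div_nonneg (hF x (mem_filter.1 hx).1) hM.le) ((div_lt_one hM).2 hxM')).const_mul (c x)
  rcases hcM.lt_or_gt with hneg | hpos
  · right
    filter_upwards [hlim.eventually (gt_mem_nhds hneg), eventually_ne_atTop 0] with p hp hp0
    rw [hFP p hp0, hscale]
    exact mul_nonpos_of_nonneg_of_nonpos (pow_pos hM p).le hp.le
  · left
    filter_upwards [hlim.eventually (lt_mem_nhds hpos), eventually_ne_atTop 0] with p hp hp0
    rw [hFP p hp0, hscale]
    exact mul_nonneg (pow_pos hM p).le hp.le

lemma sum_comp_eq_sum_card_nsmul_of_mapsTo {ι κ M : Type*} [DecidableEq κ] [AddCommMonoid M]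
    {s : Finset ι} {t : Finset κ} {g : ι → κ} (h : ∀ i ∈ s, g i ∈ t) (f : κ → M) :
    ∑ i ∈ s, f (g i) = ∑ j ∈ t, #{i ∈ s | g i = j} • f j := by
  rw [← sum_fiberwise_of_maps_to' h]
  simp only [sum_const]

lemma eventually_sum_pow_le_or_ge {ι κ : Type*} (s : Finset ι) (t : Finset κ)
    (a : ι → ℝ) (b : κ → ℝ) (ha : ∀ i ∈ s, 0 ≤ a i) (hb : ∀ j ∈ t, 0 ≤ b j) :
    (∀ᶠ p : ℕ in atTop, ∑ i ∈ s, a i ^ p ≤ ∑ j ∈ t, b j ^ p) ∨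
      (∀ᶠ p : ℕ in atTop, ∑ j ∈ t, b j ^ p ≤ ∑ i ∈ s, a i ^ p) := by
  set F := s.image a ∪ t.image b
  have hdiff : ∀ p : ℕ, ∑ j ∈ t, b j ^ p - ∑ i ∈ s, a i ^ p =
      ∑ x ∈ F, ((#{j ∈ t | b j = x} : ℝ) - #{i ∈ s | a i = x}) * x ^ p := by
    intro p
    rw [sum_comp_eq_sum_card_nsmul_of_mapsTo (t := F)
        (fun i hi => mem_union_left _ (mem_image_of_mem a hi)) (· ^ p),
      sum_comp_eq_sum_card_nsmul_of_mapsTo (t := F)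
        (fun j hj => mem_union_right _ (mem_image_of_mem b hj)) (· ^ p),
      ← sum_sub_distrib]
    simp only [nsmul_eq_mul, sub_mul]
  have hF : ∀ x ∈ F, 0 ≤ x := by
    simp only [F, mem_union, mem_image]
    rintro x (⟨i, hi, rfl⟩ | ⟨j, hj, rfl⟩)
    exacts [ha i hi, hb j hj]
  rcases eventually_nonneg_or_nonpos_sum_mul_pow F _ hF with h | h
  · exact Or.inl (h.mono fun p hp => by linarith [hdiff p])
  · exact Or.inr (h.mono fun p hp => by linarith [hdiff p])

lemma le_of_eventually_pow_le_mul_pow {a d K : ℝ} (hd : 0 ≤ d)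
    (h : ∀ᶠ p : ℕ in atTop, a ^ p ≤ K * d ^ p) : a ≤ d := by
  by_contra! hlt
  have ha : 0 < a := hd.trans_lt hlt
  have hlim : Tendsto (fun p : ℕ => K * (d / a) ^ p) atTop (𝓝 0) := by
    simpa using (tendsto_pow_atTop_nhds_zero_of_lt_one (div_nonneg hd ha.le)
      ((div_lt_one ha).2 hlt)).const_mul K
  obtain ⟨p, hp, hp'⟩ := (h.and (hlim.eventually (gt_mem_nhds one_pos))).exists
  have hap : 0 < a ^ p := pow_pos ha p
  rw [div_pow, mul_div_assoc', div_lt_one hap] at hp'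
  exact hp'.not_ge hp

lemma le_of_eventually_sum_pow_le {ι κ : Type*} {s : Finset ι} {t : Finset κ}
    {a : ι → ℝ} {b : κ → ℝ} {d : ℝ} (ha : ∀ i ∈ s, 0 ≤ a i) (hb : ∀ j ∈ t, 0 ≤ b j)
    (hbd : ∀ j ∈ t, b j ≤ d) (hd : 0 ≤ d)
    (h : ∀ᶠ p : ℕ in atTop, ∑ i ∈ s, a i ^ p ≤ ∑ j ∈ t, b j ^ p) {i : ι} (hi : i ∈ s) :
    a i ≤ d := by
  refine le_of_eventually_pow_le_mul_pow (K := #t) hd (h.mono fun p hp => ?_)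
  calc a i ^ p ≤ ∑ i ∈ s, a i ^ p := single_le_sum (fun j hj => pow_nonneg (ha j hj) p) hi
    _ ≤ ∑ j ∈ t, b j ^ p := hp
    _ ≤ ∑ _j ∈ t, d ^ p := sum_le_sum fun j hj => pow_le_pow_left₀ (hb j hj) (hbd j hj) p
    _ = #t * d ^ p := by rw [sum_const, nsmul_eq_mul]

end PowerSums

section Congestion

variable {V : Type*} [Fintype V] [DecidableEq V] (G : SimpleGraph V) (ω : Sym2 V → ℝ)

lemma edgeCongestion_nonneg (hω : ∀ e ∈ G.edgeSet, 0 ≤ ω e) (T : SimpleGraph V)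
    (e : Sym2 V) : 0 ≤ edgeCongestion G T ω e :=
  sum_nonneg fun f _ => by
    split_ifs with hf
    exacts [hω f hf.1, le_rfl]

noncomputable def congestionPowSum (T : SimpleGraph V) (p : ℕ) : ℝ :=
  ∑ e ∈ univ.filter (· ∈ T.edgeSet), edgeCongestion G T ω e ^ p

lemma treeCong_eq_congestionPowSum_rpow (T : SimpleGraph V) (p : ℕ) :
    treeCong G T ω p = congestionPowSum G ω T p ^ ((1 : ℝ) / p) := by
  rw [treeCong, congestionPowSum, sum_filter]

lemma treeCong_le_of_congestionPowSum_le {T T' : SimpleGraph V} {p : ℕ}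
    (hω : ∀ e ∈ G.edgeSet, 0 ≤ ω e)
    (h : congestionPowSum G ω T p ≤ congestionPowSum G ω T' p) :
    treeCong G T ω p ≤ treeCong G T' ω p := by
  rw [treeCong_eq_congestionPowSum_rpow, treeCong_eq_congestionPowSum_rpow]
  exact Real.rpow_le_rpow (sum_nonneg fun e _ => pow_nonneg (edgeCongestion_nonneg G ω hω T e) p)
    h (by positivity)

lemma edgeCongestion_le_treeCongTop (T : SimpleGraph V) {e : Sym2 V} (he : e ∈ T.edgeSet) :
    edgeCongestion G T ω e ≤ treeCongTop G T ω :=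
  (ciSup_pos he).symm.le.trans <|
    le_ciSup (f := fun e => ⨆ _ : e ∈ T.edgeSet, edgeCongestion G T ω e)
      (Set.finite_range _).bddAbove e

lemma treeCongTop_le_of_eventually_congestionPowSum_le {T T' : SimpleGraph V}
    (hω : ∀ e ∈ G.edgeSet, 0 ≤ ω e)
    (h : ∀ᶠ p : ℕ in atTop, congestionPowSum G ω T p ≤ congestionPowSum G ω T' p) :
    treeCongTop G T ω ≤ treeCongTop G T' ω := by
  have hc := edgeCongestion_nonneg G ω hω
  have hd : 0 ≤ treeCongTop G T' ω := Real.iSup_nonneg fun e => Real.iSup_nonneg fun _ => hc T' e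
  refine Real.iSup_le (fun e => Real.iSup_le (fun he => ?_) hd) hd
  exact le_of_eventually_sum_pow_le (fun e _ => hc T e) (fun e _ => hc T' e)
    (fun f hf => edgeCongestion_le_treeCongTop G ω T' (mem_filter.1 hf).2) hd h
    (mem_filter.2 ⟨mem_univ e, he⟩)

lemma eventually_congestionPowSum_le_or_ge (hω : ∀ e ∈ G.edgeSet, 0 ≤ ω e)
    (T T' : SimpleGraph V) :
    (∀ᶠ p : ℕ in atTop, congestionPowSum G ω T p ≤ congestionPowSum G ω T' p) ∨
      (∀ᶠ p : ℕ in atTop, congestionPowSum G ω T' p ≤ congestionPowSum G ω T p) :=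
  eventually_sum_pow_le_or_ge _ _ _ _ (fun e _ => edgeCongestion_nonneg G ω hω T e)
    (fun e _ => edgeCongestion_nonneg G ω hω T' e)

lemma exists_spanningTree_eventually_congestionPowSum_le (hG : G.Connected)
    (hω : ∀ e ∈ G.edgeSet, 0 ≤ ω e) :
    ∃ T, IsSpanningTree G T ∧ ∀ T', IsSpanningTree G T' →
      ∀ᶠ p : ℕ in atTop, congestionPowSum G ω T p ≤ congestionPowSum G ω T' p := by
  obtain ⟨T₀, hT₀⟩ := hG.exists_isTree_le
  obtain ⟨T, hT, hmin⟩ := (Set.toFinite {T | IsSpanningTree G T}).exists_minimalFor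
    (fun T => (congestionPowSum G ω T : Germ (atTop : Filter ℕ) ℝ)) _ ⟨T₀, hT₀⟩
  exact ⟨T, hT, fun T' hT' =>
    (eventually_congestionPowSum_le_or_ge G ω hω T T').elim id (hmin hT')⟩

end Congestion

/-- There is a single spanning tree minimizing the `L^p` spanning tree congestion for all
sufficiently large integers `p` and also for `p = ∞`. -/
theorem exists_spanningTree_min_large_p {V : Type*} [Fintype V] [DecidableEq V]
    (G : SimpleGraph V) (hG : G.Connected) (ω : Sym2 V → ℝ)
    (hω : ∀ e ∈ G.edgeSet, 0 < ω e) :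
    ∃ T : SimpleGraph V, IsSpanningTree G T ∧
      (∃ N : ℕ, ∀ p : ℕ, N ≤ p → ∀ T' : SimpleGraph V, IsSpanningTree G T' →
        treeCong G T ω p ≤ treeCong G T' ω p) ∧
      (∀ T' : SimpleGraph V, IsSpanningTree G T' →
        treeCongTop G T ω ≤ treeCongTop G T' ω) := by
  have hω' : ∀ e ∈ G.edgeSet, 0 ≤ ω e := fun e he => (hω e he).le
  obtain ⟨T, hT, hmin⟩ := exists_spanningTree_eventually_congestionPowSum_le G ω hG hω'
  obtain ⟨N, hN⟩ := eventually_atTop.1 <|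
    eventually_all.2 fun T' => eventually_imp_distrib_left.2 (hmin T')
  exact ⟨T, hT,
    ⟨N, fun p hp T' hT' => treeCong_le_of_congestionPowSum_le G ω hω' (hN p hp T' hT')⟩,
    fun T' hT' => treeCongTop_le_of_eventually_congestionPowSum_le G ω hω' (hmin T' hT')⟩
end

section
/- Let T* be a minimum weight spanning tree (Kruskal tree) of a connected edge-weighted graph (G,ρ), and T any spanning tree. If (e_1,…,e_{n−1}) and (e'_1,…,e'_{n−1}) are the edges of T* and T listed in increasing order of ρ, then ρ(e_i) ≤ ρ(e'_i) for every i. -/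
open Classical

/-
Suppose `ρ(e'_i) < ρ(e_i) =: w`. The edges of `T` lighter than `w` form a forest with at least
`i + 1` edges, those of `T*` a forest with at most `i` edges. By the cut property of a minimum
spanning tree, any two vertices joined by an edge of `G` lighter than `w` are already connected
by edges of `T*` lighter than `w`. So the light forest of `T*` has at most as many components as
that of `T`, and since a forest on `n` vertices with `c` components has `n - c` edges, at least
as many edges: a contradiction.
-/

namespace SimpleGraph

variable {V : Type*} {H K : SimpleGraph V}

theorem reachable_of_forall_adj_reachable (h : ∀ ⦃u v⦄, H.Adj u v → K.Reachable u v)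
    {u v : V} (huv : H.Reachable u v) : K.Reachable u v := by
  obtain ⟨p⟩ := huv
  induction p with
  | nil => rfl
  | cons hadj _ ih => exact (h hadj).trans ih

theorem reachable_deleteEdges_or_of_reachable {c d x y : V} (hxy : H.Reachable x y) :
    (H.deleteEdges {s(c, d)}).Reachable x y ∨
      (H.deleteEdges {s(c, d)}).Reachable x c ∧ (H.deleteEdges {s(c, d)}).Reachable d y ∨
      (H.deleteEdges {s(c, d)}).Reachable x d ∧ (H.deleteEdges {s(c, d)}).Reachable c y := by
  obtain ⟨p⟩ := hxy
  induction p with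
  | nil => exact .inl .rfl
  | @cons x z y hxz _ ih =>
    by_cases he : s(x, z) = s(c, d)
    · rcases Sym2.eq_iff.mp he with ⟨rfl, rfl⟩ | ⟨rfl, rfl⟩ <;> grind [Reachable.rfl]
    · have hxz' : (H.deleteEdges {s(c, d)}).Reachable x z :=
        (deleteEdges_adj.mpr ⟨hxz, he⟩).reachable
      grind [Reachable.trans]

theorem card_connectedComponent_deleteEdges_of_isBridge [Finite V] {c d : V} (hcd : H.Adj c d)
    (hb : H.IsBridge s(c, d)) :
    Nat.card (H.deleteEdges {s(c, d)}).ConnectedComponent = Nat.card H.ConnectedComponent + 1 := by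
  let φ := ConnectedComponent.map (Hom.ofLE (H.deleteEdges_le {s(c, d)}))
  let D := (H.deleteEdges {s(c, d)}).connectedComponentMk d
  have hinj : Set.InjOn φ {D}ᶜ := by
    intro C hC C' hC' h
    induction C using ConnectedComponent.ind with | h x => ?_
    induction C' using ConnectedComponent.ind with | h y => ?_
    simp only [Set.mem_compl_iff, Set.mem_singleton_iff, ConnectedComponent.eq, φ, D,
      ConnectedComponent.map_mk, Hom.coe_ofLE, id] at hC hC' h ⊢
    rcases reachable_deleteEdges_or_of_reachable (c := c) (d := d) h with
      h | ⟨-, h⟩ | ⟨h, -⟩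
    · exact h
    · exact absurd h.symm hC'
    · exact absurd h hC
  have himage : φ '' {D}ᶜ = Set.univ := by
    refine Set.eq_univ_of_forall fun C ↦ ?_
    induction C using ConnectedComponent.ind with | h x => ?_
    by_cases hx : (H.deleteEdges {s(c, d)}).Reachable x d
    · refine ⟨(H.deleteEdges {s(c, d)}).connectedComponentMk c, fun hc ↦ hb ?_, ?_⟩
      · exact ConnectedComponent.eq.mp hc
      · simp only [φ, ConnectedComponent.map_mk, Hom.coe_ofLE, id, ConnectedComponent.eq]
        exact hcd.reachable.trans ((hx.mono (H.deleteEdges_le _)).symm)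
    · exact ⟨_, fun h ↦ hx (ConnectedComponent.eq.mp h), rfl⟩
  have h1 := hinj.ncard_image
  have h2 := Set.ncard_sdiff_singleton_add_one (Set.mem_univ D)
  rw [himage, Set.ncard_univ, Set.compl_eq_univ_sdiff] at h1
  rw [Set.ncard_univ] at h2
  omega

theorem IsAcyclic.ncard_edgeSet_add_card_connectedComponent [Finite V] (hH : H.IsAcyclic) :
    H.edgeSet.ncard + Nat.card H.ConnectedComponent = Nat.card V := by
  induction hn : H.edgeSet.ncard generalizing H with
  | zero =>
    obtain rfl : H = ⊥ := edgeSet_eq_empty.mp ((Set.ncard_eq_zero).mp hn)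
    have hbij : Function.Bijective (⊥ : SimpleGraph V).connectedComponentMk :=
      ⟨fun u v h ↦ reachable_bot.mp (ConnectedComponent.eq.mp h),
        fun C ↦ C.ind fun v ↦ ⟨v, rfl⟩⟩
    rw [zero_add, Nat.card_eq_of_bijective _ hbij]
  | succ n ih =>
    obtain ⟨e, he⟩ : H.edgeSet.Nonempty := Set.nonempty_of_ncard_ne_zero (by omega)
    induction e using Sym2.ind with | h c d => ?_
    have := ih (hH.anti (H.deleteEdges_le _))
      (by rw [edgeSet_deleteEdges, Set.ncard_sdiff_singleton_of_mem he, hn]; rfl)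
    rw [card_connectedComponent_deleteEdges_of_isBridge he
      (isAcyclic_iff_forall_isBridge.mp hH he)] at this
    omega

theorem IsAcyclic.isTree_of_ncard_edgeSet_add_one [Finite V] [Nonempty V] (hH : H.IsAcyclic)
    (hcard : H.edgeSet.ncard + 1 = Nat.card V) : H.IsTree := by
  have hcc : Nat.card H.ConnectedComponent = 1 := by
    have := hH.ncard_edgeSet_add_card_connectedComponent
    omega
  have : Subsingleton H.ConnectedComponent := (Nat.card_eq_one_iff_unique.mp hcc).1
  refine ⟨(connected_iff _).mpr ⟨fun u v ↦ ?_, inferInstance⟩, hH⟩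
  exact ConnectedComponent.eq.mp (Subsingleton.elim _ _)

theorem card_connectedComponent_le_of_forall_adj_reachable [Finite V]
    (h : ∀ ⦃u v⦄, H.Adj u v → K.Reachable u v) :
    Nat.card K.ConnectedComponent ≤ Nat.card H.ConnectedComponent := by
  refine Nat.card_le_card_of_surjective
    (fun C ↦ C.lift K.connectedComponentMk fun u v p _ ↦ ?_) fun C ↦ ?_
  · exact ConnectedComponent.eq.mpr (reachable_of_forall_adj_reachable h p.reachable)
  · induction C using ConnectedComponent.ind with
    | h v => exact ⟨H.connectedComponentMk v, rfl⟩

theorem IsAcyclic.ncard_edgeSet_le_of_forall_adj_reachable [Finite V] (hH : H.IsAcyclic)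
    (hK : K.IsAcyclic) (h : ∀ ⦃u v⦄, H.Adj u v → K.Reachable u v) :
    H.edgeSet.ncard ≤ K.edgeSet.ncard := by
  have := card_connectedComponent_le_of_forall_adj_reachable h
  have := hH.ncard_edgeSet_add_card_connectedComponent
  have := hK.ncard_edgeSet_add_card_connectedComponent
  omega

theorem IsAcyclic.not_reachable_deleteEdges_of_mem_edges {T : SimpleGraph V} (hT : T.IsAcyclic)
    {a b : V} {p : T.Walk a b} (hp : p.IsPath) {e : Sym2 V} (he : e ∈ p.edges) :
    ¬(T.deleteEdges {e}).Reachable a b := by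
  intro hreach
  obtain ⟨q, hq⟩ := hreach.exists_isPath
  have hqp : q.mapLe (T.deleteEdges_le _) = p :=
    congrArg Subtype.val ((hT.subsingleton_path a b).elim ⟨_, hq.mapLe _⟩ ⟨p, hp⟩)
  rw [← hqp, Walk.edges_mapLe_eq_edges] at he
  simpa using q.edges_subset_edgeSet he

theorem IsTree.deleteEdges_sup_edge [Finite V] {T : SimpleGraph V} (hT : T.IsTree) {a b : V}
    {p : T.Walk a b} (hp : p.IsPath) {e : Sym2 V} (he : e ∈ p.edges) :
    (T.deleteEdges {e} ⊔ edge a b).IsTree := by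
  have hab : a ≠ b := by
    rintro rfl
    simp [Walk.eq_nil_iff_nil.mpr (Walk.isPath_iff_nil.mp hp)] at he
  have hsep := hT.isAcyclic.not_reachable_deleteEdges_of_mem_edges hp he
  have : Nonempty V := ⟨a⟩
  refine ((hT.isAcyclic.anti (T.deleteEdges_le _)).sup_edge_of_not_reachable hsep
    |>.isTree_of_ncard_edgeSet_add_one ?_)
  have hnew : s(a, b) ∉ (T.deleteEdges {e}).edgeSet := fun h ↦ hsep (Adj.reachable h)
  have heT : e ∈ T.edgeSet := p.edges_subset_edgeSet he
  have hcard := (isTree_iff_connected_and_card.mp hT).2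
  rw [Nat.card_coe_set_eq] at hcard
  have hpos : 0 < T.edgeSet.ncard := (Set.ncard_pos).mpr ⟨e, heT⟩
  rw [edgeSet_sup, edgeSet_edge_of_ne hab, Set.union_singleton, Set.ncard_insert_of_notMem hnew,
    edgeSet_deleteEdges, Set.ncard_sdiff_singleton_of_mem heT]
  omega

end SimpleGraph

open SimpleGraph

section MinSpanningTree

variable {V : Type*} [Fintype V] {G T : SimpleGraph V} {ρ : Sym2 V → ℝ}

theorem totalWeight_eq_sum_filter (T : SimpleGraph V) (ρ : Sym2 V → ℝ) :
    totalWeight T ρ = ∑ x with x ∈ T.edgeSet, ρ x :=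
  (Finset.sum_filter _ _).symm

theorem totalWeight_deleteEdges_sup_edge {e : Sym2 V} (he : e ∈ T.edgeSet) {a b : V}
    (hab : a ≠ b) (hnew : s(a, b) ∉ T.edgeSet) :
    totalWeight (T.deleteEdges {e} ⊔ edge a b) ρ = totalWeight T ρ - ρ e + ρ s(a, b) := by
  calc totalWeight (T.deleteEdges {e} ⊔ edge a b) ρ
      = ∑ x ∈ insert s(a, b) ((Finset.univ.filter (· ∈ T.edgeSet)).erase e), ρ x := by
        rw [totalWeight_eq_sum_filter]
        congr 1
        ext x
        simp only [edgeSet_sup, edgeSet_edge_of_ne hab, edgeSet_deleteEdges, Finset.mem_filter,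
          Finset.mem_univ, true_and, Finset.mem_insert, Finset.mem_erase]
        grind
    _ = totalWeight T ρ - ρ e + ρ s(a, b) := by
        rw [Finset.sum_insert (by simp [hnew]), Finset.sum_erase_eq_sub (by simpa),
          totalWeight_eq_sum_filter]
        ring

def IsMinSpanningTree (G T : SimpleGraph V) (ρ : Sym2 V → ℝ) : Prop :=
  IsSpanningTree G T ∧
    ∀ T' : SimpleGraph V, IsSpanningTree G T' → totalWeight T ρ ≤ totalWeight T' ρ

/-- Cycle property: otherwise exchanging `e` for `s(a, b)` gives a lighter spanning tree. -/
theorem IsMinSpanningTree.le_of_mem_edges (hT : IsMinSpanningTree G T ρ) {a b : V}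
    (hab : G.Adj a b) {p : T.Walk a b} (hp : p.IsPath) {e : Sym2 V} (he : e ∈ p.edges) :
    ρ e ≤ ρ s(a, b) := by
  by_contra! hlt
  have hsep := hT.1.2.isAcyclic.not_reachable_deleteEdges_of_mem_edges hp he
  have hnew : s(a, b) ∉ T.edgeSet := by
    intro habT
    by_cases hae : s(a, b) = e
    · exact hlt.ne (congrArg ρ hae)
    · exact hsep (deleteEdges_adj.mpr ⟨habT, hae⟩).reachable
  have hspan : IsSpanningTree G (T.deleteEdges {e} ⊔ edge a b) :=
    ⟨sup_le ((T.deleteEdges_le _).trans hT.1.1) ((edge_le_iff G).mpr (.inr hab)),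
      hT.1.2.deleteEdges_sup_edge hp he⟩
  have := hT.2 _ hspan
  rw [totalWeight_deleteEdges_sup_edge (p.edges_subset_edgeSet he) hab.ne hnew] at this
  linarith

theorem IsMinSpanningTree.reachable_deleteEdges_of_adj (hT : IsMinSpanningTree G T ρ) {a b : V}
    (hab : G.Adj a b) {w : ℝ} (hw : ρ s(a, b) < w) :
    (T.deleteEdges {e | w ≤ ρ e}).Reachable a b := by
  by_contra hsep
  obtain ⟨p, hp⟩ := hT.1.2.connected.exists_isPath a b
  obtain ⟨e, hwe, he⟩ := p.exists_mem_edges_of_not_reachable_deleteEdges hsep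
  exact (hT.le_of_mem_edges hab hp he).not_gt (hw.trans_le hwe)

theorem IsMinSpanningTree.ncard_edgeSet_deleteEdges_le (hT : IsMinSpanningTree G T ρ)
    {H : SimpleGraph V} (hHG : H ≤ G) (hH : H.IsAcyclic) (w : ℝ) :
    (H.deleteEdges {e | w ≤ ρ e}).edgeSet.ncard ≤
      (T.deleteEdges {e | w ≤ ρ e}).edgeSet.ncard := by
  refine (hH.anti (H.deleteEdges_le _)).ncard_edgeSet_le_of_forall_adj_reachable
    (hT.1.2.isAcyclic.anti (T.deleteEdges_le _)) fun u v huv ↦ ?_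
  obtain ⟨hHuv, hlight⟩ := deleteEdges_adj.mp huv
  exact hT.reachable_deleteEdges_of_adj (hHG hHuv) (not_le.mp hlight)

end MinSpanningTree

section SortedEdges

variable {V : Type*} {H : SimpleGraph V} {ρ : Sym2 V → ℝ} {k : ℕ}

theorem ncard_edgeSet_deleteEdges_le_of_monotone {f : Fin k → Sym2 V}
    (hf : ∀ e ∈ H.edgeSet, ∃ j, f j = e) (hmono : Monotone (ρ ∘ f)) (i : Fin k) :
    (H.deleteEdges {e | ρ (f i) ≤ ρ e}).edgeSet.ncard ≤ i := by
  calc (H.deleteEdges {e | ρ (f i) ≤ ρ e}).edgeSet.ncard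
      ≤ (((Finset.Iio i).image f : Finset (Sym2 V)) : Set (Sym2 V)).ncard := by
        refine Set.ncard_le_ncard (fun e he ↦ ?_) (Finset.finite_toSet _)
        rw [edgeSet_deleteEdges] at he
        obtain ⟨j, rfl⟩ := hf e he.1
        exact Finset.mem_image_of_mem f
          (Finset.mem_Iio.mpr (lt_of_not_ge fun hij ↦ he.2 (hmono hij)))
    _ ≤ (Finset.Iio i).card := by rw [Set.ncard_coe_finset]; exact Finset.card_image_le
    _ = i := Fin.card_Iio i

theorem le_ncard_edgeSet_deleteEdges_of_monotone [Finite V] {g : Fin k → Sym2 V}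
    (hg : ∀ j, g j ∈ H.edgeSet) (hinj : Function.Injective g) (hmono : Monotone (ρ ∘ g))
    {i : Fin k} {w : ℝ} (hw : ρ (g i) < w) :
    (i : ℕ) + 1 ≤ (H.deleteEdges {e | w ≤ ρ e}).edgeSet.ncard := by
  calc (i : ℕ) + 1 = ((Finset.Iic i).image g).card := by
        rw [Finset.card_image_of_injective _ hinj, Fin.card_Iic]
    _ = (((Finset.Iic i).image g : Finset (Sym2 V)) : Set (Sym2 V)).ncard :=
        (Set.ncard_coe_finset _).symm
    _ ≤ (H.deleteEdges {e | w ≤ ρ e}).edgeSet.ncard := by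
        refine Set.ncard_le_ncard (fun e he ↦ ?_)
        obtain ⟨j, hj, rfl⟩ := Finset.mem_image.mp he
        rw [edgeSet_deleteEdges]
        exact ⟨hg j, not_le.mpr ((hmono (Finset.mem_Iic.mp hj)).trans_lt hw)⟩

end SortedEdges

theorem kruskal_sorted_weights_le_general {V : Type*} [Fintype V]
    (G : SimpleGraph V) (ρ : Sym2 V → ℝ)
    (Tstar : SimpleGraph V) (hTs : IsSpanningTree G Tstar)
    (hmin : ∀ T : SimpleGraph V, IsSpanningTree G T →
      totalWeight Tstar ρ ≤ totalWeight T ρ)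
    (T : SimpleGraph V) (hT : IsSpanningTree G T)
    (k : ℕ)
    (f g : Fin k → Sym2 V)
    (hf₃ : ∀ e ∈ Tstar.edgeSet, ∃ i, f i = e) (hf₄ : Monotone (ρ ∘ f))
    (hg₁ : ∀ i, g i ∈ T.edgeSet) (hg₂ : Function.Injective g)
    (hg₄ : Monotone (ρ ∘ g)) :
    ∀ i : Fin k, ρ (f i) ≤ ρ (g i) := by
  intro i
  by_contra! hi
  have hTs_light := ncard_edgeSet_deleteEdges_le_of_monotone hf₃ hf₄ i
  have hT_light := le_ncard_edgeSet_deleteEdges_of_monotone hg₁ hg₂ hg₄ hi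
  have hcompare :=
    IsMinSpanningTree.ncard_edgeSet_deleteEdges_le ⟨hTs, hmin⟩ hT.1 hT.2.isAcyclic (ρ (f i))
  omega

/-- If `T*` is a minimum weight spanning tree of `(G,ρ)` and `T` any spanning tree, and the
edges of both trees are listed in increasing order of `ρ`, then the `i`-th weight of `T*`
is at most the `i`-th weight of `T`. -/
theorem kruskal_sorted_weights_le {V : Type*} [Fintype V] [DecidableEq V]
    (G : SimpleGraph V) (hG : G.Connected) (ρ : Sym2 V → ℝ)
    (Tstar : SimpleGraph V) (hTs : IsSpanningTree G Tstar)
    (hmin : ∀ T : SimpleGraph V, IsSpanningTree G T →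
      totalWeight Tstar ρ ≤ totalWeight T ρ)
    (T : SimpleGraph V) (hT : IsSpanningTree G T)
    (k : ℕ) (hk : k = Fintype.card V - 1)
    (f g : Fin k → Sym2 V)
    (hf₁ : ∀ i, f i ∈ Tstar.edgeSet) (hf₂ : Function.Injective f)
    (hf₃ : ∀ e ∈ Tstar.edgeSet, ∃ i, f i = e) (hf₄ : Monotone (ρ ∘ f))
    (hg₁ : ∀ i, g i ∈ T.edgeSet) (hg₂ : Function.Injective g)
    (hg₃ : ∀ e ∈ T.edgeSet, ∃ i, g i = e) (hg₄ : Monotone (ρ ∘ g)) :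
    ∀ i : Fin k, ρ (f i) ≤ ρ (g i) :=
  kruskal_sorted_weights_le_general G ρ Tstar hTs hmin T hT k f g hf₃ hf₄ hg₁ hg₂ hg₄
end

section
/- For an unweighted connected graph G and any spanning tree T, C_1(G,T) = (|V|−1) + Σ_{e ∈ E\E_T} |℘_e|, where ℘_e is the unique path in T joining the endpoints of e. Consequently C_1(G,T) = |V| − 1 + stretch(G,T), so T minimizes the L^1 spanning tree congestion if and only if T minimizes the total stretch. -/
open Classical

/-- Total stretch of a spanning tree `T` of `G` (unweighted): the sum, over edges of `G`
not in `T`, of the length of the unique `T`-path joining their endpoints. -/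
noncomputable def totalStretch {V : Type*} [Fintype V] [DecidableEq V]
    (G T : SimpleGraph V) : ℝ :=
  ∑ e : Sym2 V,
    if e ∈ G.edgeSet ∧ e ∉ T.edgeSet then
      sSup {x | ∃ a b : V, e = s(a, b) ∧
        ∃ p : T.Walk a b, p.IsPath ∧ x = (p.length : ℝ)}
    else 0

section Helpers
open SimpleGraph
variable {V : Type*} [Fintype V] [DecidableEq V]

omit [Fintype V] in
lemma mem_edges_iff_sep {T : SimpleGraph V} (hT : T.IsTree) {a b : V}
    {p : T.Walk a b} (hp : p.IsPath) (e : Sym2 V) :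
    e ∈ p.edges ↔ e ∈ T.edgeSet ∧ ¬ (T.deleteEdges {e}).Reachable a b := by
  constructor
  · intro he
    refine ⟨p.edges_subset_edgeSet he, fun hr => ?_⟩
    obtain ⟨w⟩ := hr
    have hw : ∀ f ∈ (w.toPath : (T.deleteEdges {e}).Walk a b).edges, f ∈ T.edgeSet := by
      intro f hf
      have := Walk.edges_subset_edgeSet _ hf
      rw [edgeSet_deleteEdges] at this
      exact this.1
    have hpath : ((w.toPath : (T.deleteEdges {e}).Walk a b).transfer T hw).IsPath :=
      (w.toPath.2).transfer hw
    have heq : (w.toPath : (T.deleteEdges {e}).Walk a b).transfer T hw = p :=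
      (hT.existsUnique_path a b).unique hpath hp
    rw [← heq, Walk.edges_transfer] at he
    have := Walk.edges_subset_edgeSet _ he
    rw [edgeSet_deleteEdges] at this
    exact this.2 rfl
  · rintro ⟨heT, hnr⟩
    by_contra he
    apply hnr
    refine ⟨p.transfer (T.deleteEdges {e}) (fun f hf => ?_)⟩
    rw [edgeSet_deleteEdges]
    exact ⟨p.edges_subset_edgeSet hf, fun h => he ((Set.mem_singleton_iff.mp h) ▸ hf)⟩

omit [Fintype V] [DecidableEq V] in
lemma sSup_path_length {T : SimpleGraph V} (hT : T.IsTree) (a b : V)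
    {p : T.Walk a b} (hp : p.IsPath) :
    sSup {x | ∃ a' b' : V, s(a,b) = s(a',b') ∧
        ∃ q : T.Walk a' b', q.IsPath ∧ x = (q.length : ℝ)} = (p.length : ℝ) := by
  have hset : {x | ∃ a' b' : V, s(a,b) = s(a',b') ∧
      ∃ q : T.Walk a' b', q.IsPath ∧ x = (q.length : ℝ)} = {(p.length : ℝ)} := by
    ext x
    simp only [Set.mem_setOf_eq, Set.mem_singleton_iff]
    constructor
    · rintro ⟨a', b', h, q, hq, rfl⟩
      rcases Sym2.eq_iff.mp h with ⟨rfl, rfl⟩ | ⟨rfl, rfl⟩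
      · rw [(hT.existsUnique_path a b).unique hq hp]
      · have h2 : q.reverse = p := (hT.existsUnique_path a b).unique hq.reverse hp
        rw [← h2, Walk.length_reverse]
    · rintro rfl; exact ⟨a, b, rfl, p, hp, rfl⟩
  rw [hset, csSup_singleton]

lemma treeCong_eq (G T : SimpleGraph V) (hT : IsSpanningTree G T) :
    treeCong G T (fun _ => (1 : ℝ)) 1 = ((Fintype.card V : ℝ) - 1) + totalStretch G T := by
  obtain ⟨hle, htree⟩ := hT
  classical
  have h1 : treeCong G T (fun _ => (1:ℝ)) 1
      = ∑ e : Sym2 V, ∑ f : Sym2 V,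
          if e ∈ T.edgeSet ∧ f ∈ G.edgeSet ∧
             (∃ a b : V, f = s(a,b) ∧ ¬ (T.deleteEdges {e}).Reachable a b)
          then (1:ℝ) else 0 := by
    unfold treeCong edgeCongestion
    rw [Nat.cast_one, div_one, Real.rpow_one]
    refine Finset.sum_congr rfl fun e _ => ?_
    split_ifs with he
    · rw [pow_one]
      exact Finset.sum_congr rfl fun f _ => by simp [he]
    · simp [he]
  have hcard : ((Fintype.card V : ℝ) - 1)
      = ∑ f : Sym2 V, if f ∈ T.edgeSet then (1:ℝ) else 0 := by
    have hc := htree.card_edgeFinset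
    have hfil : (Finset.univ.filter (fun f : Sym2 V => f ∈ T.edgeSet)) = T.edgeFinset := by
      ext x; simp [mem_edgeFinset]
    rw [Finset.sum_boole, hfil]
    have : (Fintype.card V : ℝ) = (T.edgeFinset.card : ℝ) + 1 := by
      exact_mod_cast hc.symm
    rw [this]; ring
  rw [h1, Finset.sum_comm, hcard, totalStretch, ← Finset.sum_add_distrib]
  refine Finset.sum_congr rfl fun f _ => ?_
  induction f using Sym2.ind with
  | _ a b =>
  by_cases hGf : s(a,b) ∈ G.edgeSet
  · obtain ⟨p, hp, hup⟩ := htree.existsUnique_path a b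
    have hcond : ∀ e : Sym2 V,
        (e ∈ T.edgeSet ∧ s(a,b) ∈ G.edgeSet ∧
          ∃ a' b' : V, s(a,b) = s(a',b') ∧ ¬ (T.deleteEdges {e}).Reachable a' b')
        ↔ e ∈ p.edges := by
      intro e
      rw [mem_edges_iff_sep htree hp]
      constructor
      · rintro ⟨h1', -, a', b', hs, hnr⟩
        rcases Sym2.eq_iff.mp hs with ⟨rfl, rfl⟩ | ⟨rfl, rfl⟩
        · exact ⟨h1', hnr⟩
        · exact ⟨h1', fun h => hnr h.symm⟩
      · rintro ⟨h1', h2'⟩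
        exact ⟨h1', hGf, a, b, rfl, h2'⟩
    have hL : (∑ e : Sym2 V, if e ∈ T.edgeSet ∧ s(a,b) ∈ G.edgeSet ∧
          ∃ a' b' : V, s(a,b) = s(a',b') ∧ ¬ (T.deleteEdges {e}).Reachable a' b'
        then (1:ℝ) else 0) = (p.length : ℝ) := by
      rw [Finset.sum_congr rfl fun e _ => by rw [if_congr (hcond e) rfl rfl]]
      rw [Finset.sum_boole]
      have hfil : (Finset.univ.filter (fun e : Sym2 V => e ∈ p.edges)) = p.edges.toFinset := by
        ext x; simp
      rw [hfil, List.toFinset_card_of_nodup hp.edges_nodup, Walk.length_edges]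
    rw [hL]
    by_cases hTf : s(a,b) ∈ T.edgeSet
    · have hadjT : T.Adj a b := hTf
      have hone : p = Walk.cons hadjT Walk.nil := by
        refine (hup _ ?_).symm
        simp [Walk.cons_isPath_iff, hadjT.ne]
      rw [if_pos hTf, if_neg (fun h => h.2 hTf), hone]
      simp
    · rw [if_neg hTf, if_pos ⟨hGf, hTf⟩, sSup_path_length htree a b hp]
      ring
  · have hTf : s(a,b) ∉ T.edgeSet := fun h => hGf (edgeSet_mono hle h)
    rw [if_neg hTf, if_neg (fun h => hGf h.1)]
    have : ∀ e : Sym2 V, ¬ (e ∈ T.edgeSet ∧ s(a,b) ∈ G.edgeSet ∧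
        ∃ a' b' : V, s(a,b) = s(a',b') ∧ ¬ (T.deleteEdges {e}).Reachable a' b') :=
      fun e h => hGf h.2.1
    simp only [this, if_false]
    simp
end Helpers


/-- For an unweighted connected graph `G` and spanning tree `T`,
`C_1(G,T) = (|V|−1) + Σ_{e ∉ T} |℘_e|`; consequently `T` minimizes the `L^1` spanning
tree congestion iff it minimizes the total stretch. -/
theorem treeCong_one_eq_stretch {V : Type*} [Fintype V] [DecidableEq V]
    (G : SimpleGraph V) (hG : G.Connected)
    (T : SimpleGraph V) (hT : IsSpanningTree G T) :
    treeCong G T (fun _ => (1 : ℝ)) 1 = ((Fintype.card V : ℝ) - 1) + totalStretch G T ∧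
      ((∀ T' : SimpleGraph V, IsSpanningTree G T' →
          treeCong G T (fun _ => (1 : ℝ)) 1 ≤ treeCong G T' (fun _ => (1 : ℝ)) 1) ↔
        (∀ T' : SimpleGraph V, IsSpanningTree G T' →
          totalStretch G T ≤ totalStretch G T')) := by
  refine ⟨treeCong_eq G T hT, ?_⟩
  constructor
  · intro h T' hT'
    have h1 := treeCong_eq G T hT
    have h2 := treeCong_eq G T' hT'
    have h3 := h T' hT'
    linarith
  · intro h T' hT'
    have h1 := treeCong_eq G T hT
    have h2 := treeCong_eq G T' hT'
    have h3 := h T' hT'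
    linarith
end

section
/- In the complete graph K_n (n ≥ 2), for any spanning tree T and any edge e of T whose removal splits the vertices into sets of sizes m and n−m, the edge congestion equals m(n−m), and m(n−m) ≥ n−1 for all 1 ≤ m ≤ n−1. Consequently the radial (star) spanning tree minimizes the L^p congestion for every p, and C_p(K_n) = ((n−1)^{p+1})^{1/p}. -/
/-!
Deleting an edge `ab` from a spanning tree `T` of `K_n` leaves exactly two components, that of `a`
(of size `m`, say) and that of `b`, so the edges of `K_n` it separates are the `m (n - m)` pairs
across this cut. As `1 ≤ m ≤ n - 1`, `(m - 1)(n - m - 1) ≥ 0` gives `m (n - m) ≥ n - 1`, with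
equality for every edge of a star, each of which cuts off a single leaf. A spanning tree has
`n - 1` edges, so `∑ C(e)^p ≥ (n - 1)^(p + 1)`, with equality for the star.
-/

open Classical

/-- The star graph centered at `v`: `v` is joined to every other vertex. -/
def starGraph {V : Type*} (v : V) : SimpleGraph V where
  Adj a b := a ≠ b ∧ (a = v ∨ b = v)
  symm := by
    constructor
    intro a b h
    exact ⟨h.1.symm, h.2.symm⟩
  loopless := by
    constructor
    intro a h
    exact h.1 rfl

open Finset
open SimpleGraph hiding starGraph

lemma sub_one_le_mul_sub {α : Type*} [Field α] [LinearOrder α] [IsStrictOrderedRing α] {m n : α}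
    (hm : 1 ≤ m) (hmn : m + 1 ≤ n) : n - 1 ≤ m * (n - m) := by
  nlinarith [mul_nonneg (sub_nonneg.2 hm) (sub_nonneg.2 hmn)]

namespace SimpleGraph

variable {V : Type*} {G : SimpleGraph V}

lemma Walk.reachable_or_reachable_deleteEdges {u w : V} (p : G.Walk u w) (a b : V)
    (hu : (G.deleteEdges {s(a, b)}).Reachable a u ∨ (G.deleteEdges {s(a, b)}).Reachable b u) :
    (G.deleteEdges {s(a, b)}).Reachable a w ∨ (G.deleteEdges {s(a, b)}).Reachable b w := by
  induction p with
  | nil => exact hu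
  | @cons u v _ huv _ ih =>
    apply ih
    by_cases he : s(u, v) = s(a, b)
    · rcases Sym2.eq_iff.mp he with ⟨-, rfl⟩ | ⟨-, rfl⟩
      exacts [Or.inr .rfl, Or.inl .rfl]
    · have huv' : (G.deleteEdges {s(a, b)}).Adj u v := by simp [huv, he]
      exact hu.imp (·.trans huv'.reachable) (·.trans huv'.reachable)

lemma Connected.reachable_deleteEdges_iff (hG : G.Connected) (a b x y : V) :
    (G.deleteEdges {s(a, b)}).Reachable x y ↔
      ((G.deleteEdges {s(a, b)}).Reachable a x ↔ (G.deleteEdges {s(a, b)}).Reachable a y) := by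
  have hsplit (w : V) := (hG a w).some.reachable_or_reachable_deleteEdges a b (Or.inl .rfl)
  constructor
  · intro hxy
    exact ⟨(·.trans hxy), (·.trans hxy.symm)⟩
  · intro h
    by_cases hx : (G.deleteEdges {s(a, b)}).Reachable a x
    · exact hx.symm.trans (h.mp hx)
    · exact ((hsplit x).resolve_left hx).symm.trans ((hsplit y).resolve_left (mt h.mpr hx))

end SimpleGraph

section Star

variable {V : Type*}

lemma starGraph_eq (v : V) : starGraph v = SimpleGraph.starGraph v := by
  ext
  simp [starGraph, SimpleGraph.starGraph_adj]

lemma isTree_starGraph' (v : V) : (starGraph v).IsTree := by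
  simpa [starGraph_eq] using isTree_starGraph v

lemma exists_eq_of_mem_edgeSet_starGraph {v : V} {e : Sym2 V} (he : e ∈ (starGraph v).edgeSet) :
    ∃ w, w ≠ v ∧ e = s(w, v) := by
  induction e using Sym2.ind with
  | _ a b =>
  obtain ⟨hab, rfl | rfl⟩ := he
  · exact ⟨b, hab.symm, Sym2.eq_swap⟩
  · exact ⟨a, hab, rfl⟩

lemma reachable_deleteEdges_starGraph_leaf {v w : V} (hw : w ≠ v) :
    {x | ((starGraph v).deleteEdges {s(w, v)}).Reachable w x} = {w} := by
  ext x
  refine ⟨fun ⟨p⟩ => ?_, fun hx => hx ▸ .rfl⟩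
  by_contra hx
  have hnil : ¬ p.Nil := fun h => hx h.eq.symm
  obtain ⟨⟨-, hwv | hsv⟩, hsnd⟩ := p.adj_snd hnil
  · exact hw hwv
  · exact hsnd (by simpa [hsv] using hw)

end Star

lemma SimpleGraph.IsTree.cast_card_edgeFinset {V R : Type*} [Fintype V] [Ring R]
    {T : SimpleGraph V} (hT : T.IsTree) :
    (#T.edgeFinset : R) = Fintype.card V - 1 := by
  rw [← hT.card_edgeFinset, Nat.cast_add_one, add_sub_cancel_right]

section Congestion

variable {V : Type*} [Fintype V] [DecidableEq V]

lemma card_sym2_crossing (S : Finset V) :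
    #{f : Sym2 V | ∃ x y, f = s(x, y) ∧ x ∈ S ∧ y ∉ S} = #S * #Sᶜ := by
  rw [← card_product]
  symm
  refine card_bij (fun q _ => s(q.1, q.2)) ?_ ?_ ?_
  · rintro ⟨x, y⟩ hq
    simp only [mem_product, mem_compl] at hq
    simp only [mem_filter, mem_univ, true_and]
    exact ⟨x, y, rfl, hq⟩
  · rintro ⟨x, y⟩ hq ⟨x', y'⟩ hq' h
    simp only [mem_product, mem_compl] at hq hq'
    rcases Sym2.eq_iff.mp h with ⟨rfl, rfl⟩ | ⟨rfl, rfl⟩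
    · rfl
    · exact absurd hq.1 hq'.2
  · intro f hf
    simp only [mem_filter, mem_univ, true_and] at hf
    obtain ⟨x, y, rfl, hxy⟩ := hf
    exact ⟨(x, y), by simpa using hxy, rfl⟩

lemma edgeCongestion_one_eq_card (G T : SimpleGraph V) (e : Sym2 V) :
    edgeCongestion G T (fun _ => 1) e =
      #{f | f ∈ G.edgeSet ∧ ∃ a b, f = s(a, b) ∧ ¬ (T.deleteEdges {e}).Reachable a b} :=
  sum_boole _ _

lemma edgeCongestion_top_one {T : SimpleGraph V} (hT : T.Connected) (a b : V) :
    edgeCongestion ⊤ T (fun _ => 1) s(a, b) =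
      ({w | (T.deleteEdges {s(a, b)}).Reachable a w}.ncard : ℝ) *
        (Fintype.card V - {w | (T.deleteEdges {s(a, b)}).Reachable a w}.ncard) := by
  set S : Finset V := {w | (T.deleteEdges {s(a, b)}).Reachable a w}
  have hS : {w | (T.deleteEdges {s(a, b)}).Reachable a w} = (S : Set V) := by
    ext w
    simp [S]
  have hcut : edgeCongestion ⊤ T (fun _ => 1) s(a, b) = (#S * #Sᶜ : ℕ) := by
    rw [edgeCongestion_one_eq_card, ← card_sym2_crossing]
    congr 2
    ext f
    simp only [mem_filter, mem_univ, true_and, S]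
    constructor
    · rintro ⟨-, x, y, rfl, hxy⟩
      rw [hT.reachable_deleteEdges_iff] at hxy
      by_cases hx : (T.deleteEdges {s(a, b)}).Reachable a x
      · exact ⟨x, y, rfl, hx, fun hy => hxy (iff_of_true hx hy)⟩
      · exact ⟨y, x, Sym2.eq_swap, by tauto, hx⟩
    · rintro ⟨x, y, rfl, hx, hy⟩
      refine ⟨by simp only [mem_edgeSet, top_adj]; rintro rfl; exact hy hx, x, y, rfl, ?_⟩
      rw [hT.reachable_deleteEdges_iff]
      tauto
  rw [hcut, hS, Set.ncard_coe_finset, card_compl, Nat.cast_mul, Nat.cast_sub (card_le_univ S)]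

lemma sub_one_le_edgeCongestion {T : SimpleGraph V} (hT : T.IsTree) {e : Sym2 V}
    (he : e ∈ T.edgeSet) : (Fintype.card V : ℝ) - 1 ≤ edgeCongestion ⊤ T (fun _ => 1) e := by
  induction e using Sym2.ind with
  | _ a b =>
  set S := {w | (T.deleteEdges {s(a, b)}).Reachable a w}
  have hb : b ∉ S := isBridge_iff.mp (isAcyclic_iff_forall_adj_isBridge.mp hT.isAcyclic he)
  have hS : 1 ≤ S.ncard := (Set.ncard_pos).mpr ⟨a, .rfl⟩
  have hSb : S.ncard + 1 ≤ Fintype.card V := by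
    rw [← Set.ncard_insert_of_notMem hb, ← Nat.card_eq_fintype_card]
    exact Set.ncard_le_card _
  rw [edgeCongestion_top_one hT.connected]
  exact sub_one_le_mul_sub (by exact_mod_cast hS) (by exact_mod_cast hSb)

lemma edgeCongestion_starGraph {v w : V} (hw : w ≠ v) :
    edgeCongestion ⊤ (starGraph v) (fun _ => 1) s(w, v) = Fintype.card V - 1 := by
  rw [edgeCongestion_top_one (isTree_starGraph' v).connected,
    reachable_deleteEdges_starGraph_leaf hw, Set.ncard_singleton]
  ring

lemma treeCong_eq_sum_edgeFinset (G T : SimpleGraph V) (ω : Sym2 V → ℝ) (p : ℕ) :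
    treeCong G T ω p = (∑ e ∈ T.edgeFinset, edgeCongestion G T ω e ^ p) ^ ((1 : ℝ) / p) := by
  rw [treeCong, ← sum_filter]
  congr 2
  ext e
  simp

lemma sub_one_pow_succ_le_sum_edgeCongestion_pow {T : SimpleGraph V} (hT : T.IsTree) (p : ℕ) :
    ((Fintype.card V : ℝ) - 1) ^ (p + 1) ≤
      ∑ e ∈ T.edgeFinset, edgeCongestion ⊤ T (fun _ => 1) e ^ p := by
  have : Nonempty V := hT.connected.nonempty
  have hV : (1 : ℝ) ≤ Fintype.card V := by exact_mod_cast Fintype.card_pos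
  calc ((Fintype.card V : ℝ) - 1) ^ (p + 1) = #T.edgeFinset • ((Fintype.card V : ℝ) - 1) ^ p := by
        rw [nsmul_eq_mul, hT.cast_card_edgeFinset, pow_succ, mul_comm]
    _ ≤ _ := card_nsmul_le_sum _ _ _ fun e he =>
        pow_le_pow_left₀ (by linarith) (sub_one_le_edgeCongestion hT (mem_edgeFinset.mp he)) p

lemma sum_edgeCongestion_pow_starGraph (v : V) (p : ℕ) :
    ∑ e ∈ (starGraph v).edgeFinset, edgeCongestion ⊤ (starGraph v) (fun _ => 1) e ^ p =
      ((Fintype.card V : ℝ) - 1) ^ (p + 1) := by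
  have hT := isTree_starGraph' v
  have hedge : ∀ e ∈ (starGraph v).edgeFinset,
      edgeCongestion ⊤ (starGraph v) (fun _ => 1) e ^ p = ((Fintype.card V : ℝ) - 1) ^ p := by
    intro e he
    obtain ⟨w, hw, rfl⟩ := exists_eq_of_mem_edgeSet_starGraph (mem_edgeFinset.mp he)
    rw [edgeCongestion_starGraph hw]
  rw [sum_congr rfl hedge, sum_const, nsmul_eq_mul, hT.cast_card_edgeFinset, pow_succ, mul_comm]

lemma treeCong_starGraph (v : V) (p : ℕ) :
    treeCong ⊤ (starGraph v) (fun _ => 1) p =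
      (((Fintype.card V : ℝ) - 1) ^ (p + 1)) ^ ((1 : ℝ) / p) := by
  rw [treeCong_eq_sum_edgeFinset, sum_edgeCongestion_pow_starGraph]

lemma treeCong_starGraph_le {T : SimpleGraph V} (hT : T.IsTree) (v : V) (p : ℕ) :
    treeCong ⊤ (starGraph v) (fun _ => 1) p ≤ treeCong ⊤ T (fun _ => 1) p := by
  have hV : (1 : ℝ) ≤ Fintype.card V := by exact_mod_cast Fintype.card_pos_iff.mpr ⟨v⟩
  rw [treeCong_starGraph, treeCong_eq_sum_edgeFinset]
  exact Real.rpow_le_rpow (pow_nonneg (by linarith) _)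
    (sub_one_pow_succ_le_sum_edgeCongestion_pow hT p) (by positivity)

lemma graphCong_top_one [Nonempty V] (p : ℕ) :
    graphCong (⊤ : SimpleGraph V) (fun _ => 1) p =
      (((Fintype.card V : ℝ) - 1) ^ (p + 1)) ^ ((1 : ℝ) / p) := by
  obtain ⟨v⟩ := ‹Nonempty V›
  refine IsLeast.csInf_eq ⟨⟨starGraph v, ⟨le_top, ?_⟩, treeCong_starGraph v p⟩, ?_⟩
  · exact isTree_starGraph' v
  · rintro _ ⟨T, hT, rfl⟩
    rw [← treeCong_starGraph v p]
    exact treeCong_starGraph_le hT.2 v p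

end Congestion

theorem completeGraph_congestion_general (n : ℕ) :
    (∀ T : SimpleGraph (Fin n), IsSpanningTree ⊤ T → ∀ e ∈ T.edgeSet,
      ∀ a b : Fin n, e = s(a, b) →
        edgeCongestion ⊤ T (fun _ => (1 : ℝ)) e =
          (({w : Fin n | (T.deleteEdges {e}).Reachable a w}.ncard : ℝ)) *
            ((n : ℝ) - ({w : Fin n | (T.deleteEdges {e}).Reachable a w}.ncard : ℝ))) ∧
    (∀ m : ℕ, 1 ≤ m → m ≤ n - 1 → (n : ℝ) - 1 ≤ (m : ℝ) * ((n : ℝ) - (m : ℝ))) ∧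
    (∀ (v : Fin n) (p : ℕ), 1 ≤ p →
      IsSpanningTree (⊤ : SimpleGraph (Fin n)) (starGraph v) ∧
      (∀ T : SimpleGraph (Fin n), IsSpanningTree ⊤ T →
        treeCong ⊤ (starGraph v) (fun _ => (1 : ℝ)) p ≤ treeCong ⊤ T (fun _ => (1 : ℝ)) p) ∧
      graphCong (⊤ : SimpleGraph (Fin n)) (fun _ => (1 : ℝ)) p
        = (((n : ℝ) - 1) ^ (p + 1)) ^ ((1 : ℝ) / p)) := by
  refine ⟨?_, ?_, fun v p _ => ⟨⟨le_top, isTree_starGraph' v⟩, ?_, ?_⟩⟩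
  · rintro T ⟨-, hT⟩ e - a b rfl
    simpa using edgeCongestion_top_one hT.connected a b
  · intro m hm hmn
    exact sub_one_le_mul_sub (by exact_mod_cast hm) (by exact_mod_cast (by omega : m + 1 ≤ n))
  · exact fun T hT => treeCong_starGraph_le hT.2 v p
  · have : Nonempty (Fin n) := ⟨v⟩
    simpa using graphCong_top_one (V := Fin n) p

/-- In `K_n` (`n ≥ 2`): the congestion of an edge of a spanning tree splitting the vertices
into sets of sizes `m` and `n−m` equals `m(n−m)`; `m(n−m) ≥ n−1` for `1 ≤ m ≤ n−1`;
consequently the star spanning tree minimizes the `L^p` congestion for every `p ≥ 1`, and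
`C_p(K_n) = ((n−1)^(p+1))^(1/p)`. -/
theorem completeGraph_congestion (n : ℕ) (hn : 2 ≤ n) :
    (∀ T : SimpleGraph (Fin n), IsSpanningTree ⊤ T → ∀ e ∈ T.edgeSet,
      ∀ a b : Fin n, e = s(a, b) →
        edgeCongestion ⊤ T (fun _ => (1 : ℝ)) e =
          (({w : Fin n | (T.deleteEdges {e}).Reachable a w}.ncard : ℝ)) *
            ((n : ℝ) - ({w : Fin n | (T.deleteEdges {e}).Reachable a w}.ncard : ℝ))) ∧
    (∀ m : ℕ, 1 ≤ m → m ≤ n - 1 → (n : ℝ) - 1 ≤ (m : ℝ) * ((n : ℝ) - (m : ℝ))) ∧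
    (∀ (v : Fin n) (p : ℕ), 1 ≤ p →
      IsSpanningTree (⊤ : SimpleGraph (Fin n)) (starGraph v) ∧
      (∀ T : SimpleGraph (Fin n), IsSpanningTree ⊤ T →
        treeCong ⊤ (starGraph v) (fun _ => (1 : ℝ)) p ≤ treeCong ⊤ T (fun _ => (1 : ℝ)) p) ∧
      graphCong (⊤ : SimpleGraph (Fin n)) (fun _ => (1 : ℝ)) p
        = (((n : ℝ) - 1) ^ (p + 1)) ^ ((1 : ℝ) / p)) :=
  completeGraph_congestion_general n
end

section
/- For the complete bipartite graph K_{m,n} (m,n ≥ 1), the L^1 spanning tree congestion is C_1(K_{m,n}) = 3mn − 2(m+n−1), attained by the double-star spanning tree T* in which all edges except one are terminal (only two vertices have degree > 1). -/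
open Classical

/-! In the congestion sum of a spanning tree `T`, a pair (edge `f` of `G`, edge `e` of `T`) is
counted exactly when `e` lies on the `T`-path joining the ends of `f`; so the `L¹` congestion is
the sum over the edges of `G` of the `T`-distance between their ends. In `K_{m,n}` these distances
are odd, so they are `1` on the `m + n - 1` edges of `T` and at least `3` on the others, whence
`C₁(K_{m,n}, T) ≥ 3mn - 2(m + n - 1)`. In the double star every other edge closes a `4`-cycle
with the tree, so its distances are exactly `1` or `3` and the bound is attained. -/

open SimpleGraph Finset

namespace SimpleGraph

variable {V : Type*}

lemma not_reachable_deleteEdges_iff_mem_edges {T : SimpleGraph V} (hT : T.IsAcyclic) {a b : V}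
    (q : T.Path a b) (e : Sym2 V) :
    ¬ (T.deleteEdges {e}).Reachable a b ↔ e ∈ q.1.edges := by
  constructor
  · intro h
    by_contra he
    refine h (q.1.toDeleteEdges {e} fun f hf hfe => he ?_).reachable
    rwa [Set.mem_singleton_iff.mp hfe] at hf
  · rintro he ⟨p⟩
    have hq : q = ⟨_, (p.mapLe (deleteEdges_le {e})).bypass_isPath⟩ :=
      (hT.subsingleton_path a b).elim _ _
    have hp : e ∈ p.edges := by
      subst hq
      simpa using (p.mapLe (deleteEdges_le {e})).edges_bypass_subset_edges he
    simpa using p.edges_subset_edgeSet hp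

lemma exists_sym2_eq_and_not_reachable_iff {R : SimpleGraph V} {u v : V} :
    (∃ a b, s(u, v) = s(a, b) ∧ ¬ R.Reachable a b) ↔ ¬ R.Reachable u v := by
  simp [or_and_right, exists_or, reachable_comm]

lemma IsTree.card_separating_edges [Fintype V] [DecidableEq V] {T : SimpleGraph V}
    (hT : T.IsTree) (a b : V) :
    #{e ∈ T.edgeFinset | ¬ (T.deleteEdges {e}).Reachable a b} = T.dist a b := by
  obtain ⟨p, hp, hlen⟩ := hT.connected.exists_path_of_dist a b
  have : {e ∈ T.edgeFinset | ¬ (T.deleteEdges {e}).Reachable a b} = p.edges.toFinset := by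
    ext e
    rw [mem_filter, not_reachable_deleteEdges_iff_mem_edges hT.isAcyclic ⟨p, hp⟩,
      List.mem_toFinset, and_iff_right_iff_imp, mem_edgeFinset]
    exact fun he => p.edges_subset_edgeSet he
  rw [this, List.card_toFinset, hp.isTrail.edges_nodup.dedup, Walk.length_edges, hlen]

end SimpleGraph

lemma treeCong_one_eq_sum_card {V : Type*} [Fintype V] [DecidableEq V]
    (G T : SimpleGraph V) :
    treeCong G T (fun _ => 1) 1 =
      ∑ f ∈ G.edgeFinset, (#{e ∈ T.edgeFinset |
        ∃ a b, f = s(a, b) ∧ ¬ (T.deleteEdges {e}).Reachable a b} : ℝ) := by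
  simp only [treeCong, edgeCongestion, Nat.cast_one, div_one, Real.rpow_one, pow_one,
    card_filter, Nat.cast_sum, Nat.cast_ite, Nat.cast_zero, ← mem_edgeFinset]
  rw [← sum_filter, filter_mem_eq_inter, univ_inter]
  simp only [sum_ite, sum_const_zero, add_zero]
  simp only [sum_filter, ite_and, sum_ite_mem, univ_inter]
  exact sum_comm

section CompleteBipartite

variable {A B : Type*}

lemma odd_dist_inl_inr {T : SimpleGraph (A ⊕ B)} (hle : T ≤ completeBipartiteGraph A B)
    (hT : T.Connected) (i : A) (j : B) : Odd (T.dist (.inl i) (.inr j)) := by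
  obtain ⟨p, hp⟩ := hT.exists_walk_length_eq_dist (.inl i) (.inr j)
  rw [← hp, Coloring.odd_length_iff_not_congr
    ((CompleteBipartiteGraph.bicoloring A B).comp (Hom.ofLE hle))]
  simp [CompleteBipartiteGraph.bicoloring]
  rfl

lemma ite_adj_le_dist_inl_inr {T : SimpleGraph (A ⊕ B)} (hle : T ≤ completeBipartiteGraph A B)
    (hT : T.Connected) (i : A) (j : B) :
    (if T.Adj (.inl i) (.inr j) then 1 else 3) ≤ T.dist (.inl i) (.inr j) := by
  have hodd := odd_dist_inl_inr hle hT i j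
  split_ifs with h
  · exact hodd.pos
  · have : T.dist (.inl i) (.inr j) ≠ 1 := mt dist_eq_one_iff_adj.mp h
    obtain ⟨k, hk⟩ := hodd
    omega

variable [Fintype A] [Fintype B] [DecidableEq A] [DecidableEq B]

lemma sum_edgeFinset_completeBipartiteGraph {M : Type*} [AddCommMonoid M]
    (F : Sym2 (A ⊕ B) → M) :
    ∑ f ∈ (completeBipartiteGraph A B).edgeFinset, F f =
      ∑ x : A × B, F s(.inl x.1, .inr x.2) := by
  have hinj : Function.Injective fun x : A × B => s(Sum.inl x.1, Sum.inr x.2) := by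
    intro x y h
    simpa [Prod.ext_iff] using h
  rw [← sum_image fun x _ y _ h => hinj h]
  congr 1
  ext f
  simp [edgeSet_completeBipartiteGraph]

lemma card_edgeFinset_of_le_completeBipartiteGraph {H : SimpleGraph (A ⊕ B)}
    (hH : H ≤ completeBipartiteGraph A B) :
    #H.edgeFinset = #{x : A × B | H.Adj (.inl x.1) (.inr x.2)} := by
  have : H.edgeFinset = {f ∈ (completeBipartiteGraph A B).edgeFinset | f ∈ H.edgeSet} := by
    ext f
    simpa using fun hf => edgeSet_mono hH hf
  rw [this, card_filter, sum_edgeFinset_completeBipartiteGraph, card_filter]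
  rfl

lemma treeCong_completeBipartiteGraph_eq_sum_dist {T : SimpleGraph (A ⊕ B)} (hT : T.IsTree) :
    treeCong (completeBipartiteGraph A B) T (fun _ => 1) 1 =
      ∑ x : A × B, (T.dist (.inl x.1) (.inr x.2) : ℝ) := by
  rw [treeCong_one_eq_sum_card, sum_edgeFinset_completeBipartiteGraph]
  simp only [exists_sym2_eq_and_not_reachable_iff, hT.card_separating_edges]

lemma IsSpanningTree.sum_ite_adj {T : SimpleGraph (A ⊕ B)}
    (hT : IsSpanningTree (completeBipartiteGraph A B) T) :
    ∑ x : A × B, ((if T.Adj (.inl x.1) (.inr x.2) then 1 else 3 : ℕ) : ℝ) =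
      3 * Fintype.card A * Fintype.card B - 2 * (Fintype.card A + Fintype.card B - 1) := by
  have hE : (#T.edgeFinset : ℝ) = Fintype.card A + Fintype.card B - 1 := by
    have := hT.2.card_edgeFinset
    rw [Fintype.card_sum] at this
    rw [eq_sub_iff_add_eq]
    exact_mod_cast this
  rw [← hE, card_edgeFinset_of_le_completeBipartiteGraph hT.1, card_filter]
  push_cast
  rw [mul_sum, show (3 * Fintype.card A * Fintype.card B : ℝ) = ∑ _x : A × B, 3 by simp; ring,
    ← sum_sub_distrib]
  congr with x
  split_ifs <;> norm_num

lemma IsSpanningTree.le_treeCong {T : SimpleGraph (A ⊕ B)}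
    (hT : IsSpanningTree (completeBipartiteGraph A B) T) :
    3 * Fintype.card A * Fintype.card B - 2 * (Fintype.card A + Fintype.card B - 1 : ℝ) ≤
      treeCong (completeBipartiteGraph A B) T (fun _ => 1) 1 := by
  rw [treeCong_completeBipartiteGraph_eq_sum_dist hT.2, ← hT.sum_ite_adj]
  gcongr with x
  exact_mod_cast ite_adj_le_dist_inl_inr hT.1 hT.2.connected x.1 x.2

end CompleteBipartite

section DoubleStar

variable {A B : Type*}

def doubleStar (x₀ : A) (y₀ : B) : SimpleGraph (A ⊕ B) :=
  completeBipartiteGraph A B ⊓ (_root_.starGraph (.inl x₀) ⊔ _root_.starGraph (.inr y₀))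

variable {x₀ : A} {y₀ : B}

@[simp] lemma doubleStar_adj_inl_inr {i : A} {j : B} :
    (doubleStar x₀ y₀).Adj (.inl i) (.inr j) ↔ i = x₀ ∨ j = y₀ := by
  simp [doubleStar, _root_.starGraph]

@[simp] lemma doubleStar_adj_inr_inl {i : A} {j : B} :
    (doubleStar x₀ y₀).Adj (.inr j) (.inl i) ↔ i = x₀ ∨ j = y₀ := by
  rw [adj_comm, doubleStar_adj_inl_inr]

lemma doubleStar_le : doubleStar x₀ y₀ ≤ completeBipartiteGraph A B := inf_le_left

lemma connected_doubleStar : (doubleStar x₀ y₀).Connected := by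
  have hr : ∀ j, (doubleStar x₀ y₀).Reachable (.inl x₀) (.inr j) := fun j =>
    (doubleStar_adj_inl_inr.mpr (.inl rfl)).reachable
  refine (connected_iff_exists_forall_reachable _).mpr ⟨.inl x₀, ?_⟩
  rintro (i | j)
  · exact (hr y₀).trans (doubleStar_adj_inr_inl.mpr (.inr rfl)).reachable
  · exact hr j

lemma dist_doubleStar_le (i : A) (j : B) :
    (doubleStar x₀ y₀).dist (.inl i) (.inr j) ≤
      if (doubleStar x₀ y₀).Adj (.inl i) (.inr j) then 1 else 3 := by
  split_ifs with h
  · exact (dist_eq_one_iff_adj.mpr h).le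
  · -- the walk `inl i, inr y₀, inl x₀, inr j`
    exact dist_le (.cons (doubleStar_adj_inl_inr.mpr (.inr rfl))
      (.cons (doubleStar_adj_inr_inl.mpr (.inl rfl))
        (.cons (doubleStar_adj_inl_inr.mpr (.inl rfl)) .nil)))

lemma subsingleton_neighborSet_doubleStar {z : A ⊕ B} (hx : z ≠ .inl x₀)
    (hy : z ≠ .inr y₀) :
    ((doubleStar x₀ y₀).neighborSet z).Subsingleton := by
  rintro a ha b hb
  have := doubleStar_le ha
  have := doubleStar_le hb
  rcases z with i | j <;> rcases a with a | a <;> rcases b with b | b <;>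
    simp_all

variable [Fintype A] [Fintype B] [DecidableEq A] [DecidableEq B]

lemma card_filter_fst_eq_or_snd_eq_add_one (x₀ : A) (y₀ : B) :
    #{x : A × B | x.1 = x₀ ∨ x.2 = y₀} + 1 = Fintype.card A + Fintype.card B := by
  have h₁ : ({x : A × B | x.1 = x₀} : Finset _) = {x₀} ×ˢ univ := by
    ext ⟨i, j⟩; simp [eq_comm]
  have h₂ : ({x : A × B | x.2 = y₀} : Finset _) = univ ×ˢ {y₀} := by
    ext ⟨i, j⟩; simp [eq_comm]
  have h₁₂ : ({x : A × B | x.1 = x₀ ∧ x.2 = y₀} : Finset _) = {(x₀, y₀)} := by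
    ext ⟨i, j⟩; simp
  have : 0 < Fintype.card A := Fintype.card_pos_iff.mpr ⟨x₀⟩
  rw [filter_or, card_union, ← filter_and, h₁, h₂, h₁₂]
  simp only [card_product, card_singleton, card_univ]
  omega

lemma isTree_doubleStar : (doubleStar x₀ y₀).IsTree := by
  rw [isTree_iff_connected_and_card]
  refine ⟨connected_doubleStar, ?_⟩
  rw [Nat.card_eq_fintype_card, ← edgeFinset_card,
    card_edgeFinset_of_le_completeBipartiteGraph doubleStar_le]
  simpa using card_filter_fst_eq_or_snd_eq_add_one x₀ y₀

lemma isSpanningTree_doubleStar :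
    IsSpanningTree (completeBipartiteGraph A B) (doubleStar x₀ y₀) :=
  ⟨doubleStar_le, isTree_doubleStar⟩

lemma treeCong_doubleStar :
    treeCong (completeBipartiteGraph A B) (doubleStar x₀ y₀) (fun _ => 1) 1 =
      3 * Fintype.card A * Fintype.card B - 2 * (Fintype.card A + Fintype.card B - 1 : ℝ) := by
  refine le_antisymm ?_ isSpanningTree_doubleStar.le_treeCong
  rw [treeCong_completeBipartiteGraph_eq_sum_dist isTree_doubleStar,
    ← isSpanningTree_doubleStar.sum_ite_adj]
  gcongr with x
  exact_mod_cast dist_doubleStar_le x.1 x.2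

end DoubleStar

/-- For the complete bipartite graph `K_{m,n}`, `C_1(K_{m,n}) = 3mn − 2(m+n−1)`, attained by
the double-star spanning tree in which only two vertices have degree `> 1`. -/
theorem completeBipartite_cong_one (m n : ℕ) (hm : 1 ≤ m) (hn : 1 ≤ n) :
    graphCong (completeBipartiteGraph (Fin m) (Fin n)) (fun _ => (1 : ℝ)) 1
        = 3 * (m : ℝ) * n - 2 * ((m : ℝ) + n - 1) ∧
      ∃ T : SimpleGraph (Fin m ⊕ Fin n),
        IsSpanningTree (completeBipartiteGraph (Fin m) (Fin n)) T ∧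
        treeCong (completeBipartiteGraph (Fin m) (Fin n)) T (fun _ => (1 : ℝ)) 1
          = 3 * (m : ℝ) * n - 2 * ((m : ℝ) + n - 1) ∧
        ∃ x y : Fin m ⊕ Fin n, x ≠ y ∧
          ∀ z : Fin m ⊕ Fin n, 1 < (T.neighborSet z).ncard → z = x ∨ z = y := by
  let x₀ : Fin m := ⟨0, hm⟩
  let y₀ : Fin n := ⟨0, hn⟩
  have hT := isSpanningTree_doubleStar (x₀ := x₀) (y₀ := y₀)
  have hval := treeCong_doubleStar (x₀ := x₀) (y₀ := y₀)
  simp only [Fintype.card_fin] at hval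
  refine ⟨IsLeast.csInf_eq ⟨⟨_, hT, hval⟩, ?_⟩, doubleStar x₀ y₀, hT, hval,
    .inl x₀, .inr y₀, Sum.inl_ne_inr, fun z hz => ?_⟩
  · rintro _ ⟨T, hT, rfl⟩
    simpa using hT.le_treeCong
  · by_contra! h
    exact (Set.one_lt_ncard_iff_nontrivial_and_finite.mp hz).1.not_subsingleton
      (subsingleton_neighborSet_doubleStar h.1 h.2)
end

section
/- Let (G,ω) be an edge-weighted connected planar graph, T a spanning tree with dual tree T~ in (G*, ω*). For every edge e ∈ T with dual edge e* = PQ, the congestion satisfies C(G,T,e,ω) = ω(e) + ω*(℘_{e*}), where ℘_{e*} is the unique path in T~ joining P and Q and ω*(℘) is the sum of dual weights along ℘. -/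
open Classical

section DualDefs

variable {V F : Type*}

/-- `s` is the edge set of a cycle of `G`. -/
def IsCycleEdgeSet (G : SimpleGraph V) (s : Set (Sym2 V)) : Prop :=
  ∃ (u : V) (c : G.Walk u u), c.IsCycle ∧ s = {e | e ∈ c.edges}

/-- `s` is a bond (minimal edge cut) of the connected graph `G`: deleting `s` disconnects
`G`, and deleting any proper subset of `s` does not. -/
def IsBond (G : SimpleGraph F) (s : Set (Sym2 F)) : Prop :=
  s ⊆ G.edgeSet ∧ ¬(G.deleteEdges s).Connected ∧
    ∀ t : Set (Sym2 F), t ⊂ s → (G.deleteEdges t).Connected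

/-- `(Gd, d)` is an (abstract, i.e. Whitney) dual of the planar graph `G`: `d` maps the
edges of `G` bijectively onto the edges of `Gd`, and the edge sets of cycles of `G`
correspond exactly to the bonds of `Gd`. -/
def IsPlanarDual (G : SimpleGraph V) (Gd : SimpleGraph F) (d : Sym2 V → Sym2 F) : Prop :=
  Set.InjOn d G.edgeSet ∧ d '' G.edgeSet = Gd.edgeSet ∧
    ∀ s ⊆ G.edgeSet, IsCycleEdgeSet G s ↔ IsBond Gd (d '' s)

/-- The dual tree of a spanning subgraph `T` of `G`: the subgraph of the dual graph
generated by the duals of the edges of `G` not in `T`. -/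
def dualTree (G T : SimpleGraph V) (d : Sym2 V → Sym2 F) : SimpleGraph F :=
  SimpleGraph.fromEdgeSet (d '' (G.edgeSet \ T.edgeSet))

end DualDefs

/-!
An edge `f` of `G` is cut by `T - e` iff `f = e`, or `f ∉ T` and `e` lies on the fundamental
cycle of `f` in `T`. By Whitney duality that fundamental cycle is dual to a bond of `G*`, while
`℘_{e*}` closed up by `e*` is a cycle of `G*` whose only possible edges in that bond are `e*` and
`f*`. A cycle never meets a bond in exactly one edge (each edge `z` of a bond `B` is a bridge of
`G* - (B \ {z})`), so `e` lies on the fundamental cycle of `f` iff `f*` lies on `℘_{e*}`.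
Summing weights over the cut gives the formula.
-/

open SimpleGraph

section Bonds

variable {W : Type*} {H : SimpleGraph W}

theorem IsBond.isBridge_deleteEdges_diff {B : Set (Sym2 W)} (hB : IsBond H B) {z : Sym2 W}
    (hz : z ∈ B) : (H.deleteEdges (B \ {z})).IsBridge z := by
  induction z with | h x y => ?_
  by_contra hbridge
  have hconn := (hB.2.2 _ (Set.sdiff_singleton_ssubset.mpr hz)
    ).connected_delete_edge_of_not_isBridge hbridge
  rw [deleteEdges_deleteEdges, Set.sdiff_union_self,
    Set.union_eq_left.mpr (Set.singleton_subset_iff.mpr hz)] at hconn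
  exact hB.2.1 hconn

theorem IsBond.exists_mem_edges_ne_of_isCycle {B : Set (Sym2 W)} (hB : IsBond H B) {u : W}
    {c : H.Walk u u} (hc : c.IsCycle) {z : Sym2 W} (hzc : z ∈ c.edges) (hzB : z ∈ B) :
    ∃ t ∈ c.edges, t ∈ B ∧ t ≠ z := by
  by_contra! hmeet
  have hsub : ∀ t ∈ c.edges, t ∈ (H.deleteEdges (B \ {z})).edgeSet := fun t ht => by
    rw [edgeSet_deleteEdges]
    exact ⟨c.edges_subset_edgeSet ht, fun htB => htB.2 (hmeet t ht htB.1)⟩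
  exact (hB.isBridge_deleteEdges_diff hzB).notMem_edges_of_isCycle (hc.transfer hsub)
    (by rwa [Walk.edges_transfer])

theorem SimpleGraph.IsAcyclic.mem_edges_iff_not_reachable_deleteEdges (hH : H.IsAcyclic)
    {a b : W} {q : H.Walk a b} (hq : q.IsPath) {e : Sym2 W} :
    e ∈ q.edges ↔ ¬ (H.deleteEdges {e}).Reachable a b := by
  refine ⟨fun he ⟨w⟩ => ?_, q.mem_edges_of_not_reachable_deleteEdges⟩
  have := hH.subsingleton_path a b
  have hwq : w.toPath.val.mapLe (H.deleteEdges_le {e}) = q :=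
    congrArg Subtype.val (Subsingleton.elim ⟨_, w.toPath.2.mapLe _⟩ ⟨q, hq⟩)
  rw [← hwq, Walk.edges_mapLe_eq_edges] at he
  simpa using w.toPath.val.edges_subset_edgeSet he

end Bonds

section Duality

variable {V F : Type*} {G T : SimpleGraph V} {Gd : SimpleGraph F} {d : Sym2 V → Sym2 F}

theorem IsPlanarDual.map_mem_edgeSet (hdual : IsPlanarDual G Gd d) {g : Sym2 V}
    (hg : g ∈ G.edgeSet) : d g ∈ Gd.edgeSet :=
  hdual.2.1 ▸ Set.mem_image_of_mem d hg

theorem edgeSet_dualTree_subset : (dualTree G T d).edgeSet ⊆ d '' (G.edgeSet \ T.edgeSet) := by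
  rw [dualTree, edgeSet_fromEdgeSet]
  exact Set.sdiff_subset

theorem IsPlanarDual.dualTree_le (hdual : IsPlanarDual G Gd d) (T : SimpleGraph V) :
    dualTree G T d ≤ Gd := fun x y hxy => by
  obtain ⟨g, hg, hgxy⟩ := edgeSet_dualTree_subset (T := T) ((mem_edgeSet _).mpr hxy)
  rw [← mem_edgeSet, ← hgxy]
  exact hdual.map_mem_edgeSet hg.1

theorem IsPlanarDual.exists_isCycle_dualPath (hdual : IsPlanarDual G Gd d) (hTG : T ≤ G)
    {e : Sym2 V} (he : e ∈ T.edgeSet) {P Q : F} (hPQ : d e = s(P, Q))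
    {p : (dualTree G T d).Walk P Q} (hp : p.IsPath) :
    ∃ c : Gd.Walk Q Q, c.IsCycle ∧ ∀ t, t ∈ c.edges ↔ t = d e ∨ t ∈ p.edges := by
  have heG : e ∈ G.edgeSet := edgeSet_mono hTG he
  have hep : d e ∉ p.edges := fun h => by
    obtain ⟨g, ⟨hgG, hgT⟩, hg⟩ := edgeSet_dualTree_subset (p.edges_subset_edgeSet h)
    exact hgT (hdual.1 hgG heG hg ▸ he)
  have hQP : Gd.Adj Q P := by
    rw [← mem_edgeSet, Sym2.eq_swap, ← hPQ]
    exact hdual.map_mem_edgeSet heG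
  refine ⟨Walk.cons hQP (p.mapLe (hdual.dualTree_le T)), (Walk.cons_isCycle_iff _ _).mpr
    ⟨hp.mapLe _, by rwa [Walk.edges_mapLe_eq_edges, Sym2.eq_swap, ← hPQ]⟩, fun t => ?_⟩
  simp [hPQ, Sym2.eq_swap]

theorem IsPlanarDual.mem_treePath_iff_mem_dualPath (hdual : IsPlanarDual G Gd d) (hTG : T ≤ G)
    {a b : V} (hab : G.Adj a b) (hf : s(a, b) ∉ T.edgeSet) {q : T.Walk b a} (hq : q.IsPath)
    {e : Sym2 V} (he : e ∈ T.edgeSet) {P Q : F} (hPQ : d e = s(P, Q))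
    {p : (dualTree G T d).Walk P Q} (hp : p.IsPath) :
    e ∈ q.edges ↔ d s(a, b) ∈ p.edges := by
  have heG : e ∈ G.edgeSet := edgeSet_mono hTG he
  set c := Walk.cons hab (q.mapLe hTG)
  have hc : c.IsCycle := (Walk.cons_isCycle_iff _ _).mpr
    ⟨hq.mapLe hTG, by rw [Walk.edges_mapLe_eq_edges]; exact fun h => hf (q.edges_subset_edgeSet h)⟩
  have hB : IsBond Gd (d '' {x | x ∈ c.edges}) :=
    (hdual.2.2 _ fun x hx => c.edges_subset_edgeSet hx).mp ⟨a, c, hc, rfl⟩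
  have hdB : ∀ g ∈ G.edgeSet, d g ∈ d '' {x | x ∈ c.edges} ↔ g = s(a, b) ∨ g ∈ q.edges := by
    intro g hg
    refine (hdual.1.mem_image_iff (fun x hx => c.edges_subset_edgeSet hx) hg).trans ?_
    change g ∈ c.edges ↔ _
    simp [c]
  have hpB : ∀ t ∈ p.edges, t ∈ d '' {x | x ∈ c.edges} → t = d s(a, b) := fun t ht htB => by
    obtain ⟨g, ⟨hgG, hgT⟩, rfl⟩ := edgeSet_dualTree_subset (p.edges_subset_edgeSet ht)
    rcases (hdB g hgG).mp htB with rfl | hgq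
    · rfl
    · exact absurd (q.edges_subset_edgeSet hgq) hgT
  obtain ⟨c', hc', hc'edges⟩ := hdual.exists_isCycle_dualPath hTG he hPQ hp
  constructor
  · intro heq
    by_contra hfp
    obtain ⟨t, htc, htB, hne⟩ := hB.exists_mem_edges_ne_of_isCycle hc'
      ((hc'edges _).mpr (Or.inl rfl)) ((hdB e heG).mpr (Or.inr heq))
    rcases (hc'edges t).mp htc with rfl | htp
    · exact hne rfl
    · exact hfp (hpB t htp htB ▸ htp)
  · intro hfp
    by_contra heq
    obtain ⟨t, htc, htB, hne⟩ := hB.exists_mem_edges_ne_of_isCycle hc'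
      ((hc'edges _).mpr (Or.inr hfp)) ((hdB _ hab).mpr (Or.inl rfl))
    rcases (hc'edges t).mp htc with rfl | htp
    · rcases (hdB e heG).mp htB with rfl | h
      · exact hf he
      · exact heq h
    · exact hne (hpB t htp htB)

theorem IsPlanarDual.not_reachable_deleteEdges_iff (hdual : IsPlanarDual G Gd d)
    (hT : IsSpanningTree G T) {e : Sym2 V} (he : e ∈ T.edgeSet) {P Q : F} (hPQ : d e = s(P, Q))
    {p : (dualTree G T d).Walk P Q} (hp : p.IsPath) {a b : V} (hab : G.Adj a b) :
    ¬ (T.deleteEdges {e}).Reachable a b ↔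
      s(a, b) = e ∨ (s(a, b) ∉ T.edgeSet ∧ d s(a, b) ∈ p.edges) := by
  obtain ⟨hTG, hTree⟩ := hT
  by_cases hf : s(a, b) ∈ T.edgeSet
  · simp only [hf, not_true_eq_false, false_and, or_false]
    refine ⟨fun hsep => ?_, fun hfe => ?_⟩
    · by_contra hne
      exact hsep (Adj.reachable (by simpa [deleteEdges_adj, hne] using hf))
    · exact hfe ▸ isAcyclic_iff_forall_isBridge.mp hTree.isAcyclic hf
  · have hne : s(a, b) ≠ e := fun h => hf (h ▸ he)
    obtain ⟨q, hq⟩ := hTree.connected.exists_isPath b a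
    rw [reachable_comm, ← hTree.isAcyclic.mem_edges_iff_not_reachable_deleteEdges hq,
      hdual.mem_treePath_iff_mem_dualPath hTG hab hf hq he hPQ hp]
    simp only [hne, hf, not_false_eq_true, true_and, false_or]

theorem IsPlanarDual.sum_map_edges_dualTree (hdual : IsPlanarDual G Gd d) [Fintype V]
    {ω : Sym2 V → ℝ} {ωd : Sym2 F → ℝ} (hωd : ∀ f ∈ G.edgeSet, ωd (d f) = ω f) {P Q : F}
    {p : (dualTree G T d).Walk P Q} (hp : p.IsPath) :
    (p.edges.map ωd).sum = ∑ f with f ∈ G.edgeSet \ T.edgeSet ∧ d f ∈ p.edges, ω f := by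
  have himage : p.edges.toFinset =
      ({f | f ∈ G.edgeSet \ T.edgeSet ∧ d f ∈ p.edges} : Finset (Sym2 V)).image d := by
    ext t
    simp only [List.mem_toFinset, Finset.mem_image, Finset.mem_filter, Finset.mem_univ, true_and]
    refine ⟨fun ht => ?_, fun ⟨g, ⟨_, hgp⟩, hgt⟩ => hgt ▸ hgp⟩
    obtain ⟨g, hg, rfl⟩ := edgeSet_dualTree_subset (p.edges_subset_edgeSet ht)
    exact ⟨g, ⟨hg, ht⟩, rfl⟩
  rw [← List.sum_toFinset _ hp.isTrail.edges_nodup, himage, Finset.sum_image]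
  · exact Finset.sum_congr rfl fun g hg => hωd g (Finset.mem_filter.mp hg).2.1.1
  · exact fun x hx y hy => hdual.1 (Finset.mem_filter.mp hx).2.1.1 (Finset.mem_filter.mp hy).2.1.1

end Duality

theorem edgeCongestion_eq_dual_path_general {V F : Type*} [Fintype V] [DecidableEq V]
    (G : SimpleGraph V) (ω : Sym2 V → ℝ)
    (Gd : SimpleGraph F) (d : Sym2 V → Sym2 F) (hdual : IsPlanarDual G Gd d)
    (ωd : Sym2 F → ℝ) (hωd : ∀ f ∈ G.edgeSet, ωd (d f) = ω f)
    (T : SimpleGraph V) (hT : IsSpanningTree G T)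
    (e : Sym2 V) (he : e ∈ T.edgeSet)
    (P Q : F) (hPQ : d e = s(P, Q))
    (p : (dualTree G T d).Walk P Q) (hp : p.IsPath) :
    edgeCongestion G T ω e = ω e + (p.edges.map ωd).sum := by
  set S : Finset (Sym2 V) := {f | f ∈ G.edgeSet \ T.edgeSet ∧ d f ∈ p.edges} with hS
  have hcut : ({f | f ∈ G.edgeSet ∧ ∃ a b : V, f = s(a, b) ∧
      ¬ (T.deleteEdges {e}).Reachable a b} : Finset (Sym2 V)) = insert e S := by
    ext f
    induction f with | h a b => ?_
    have hsep : (∃ x y : V, s(a, b) = s(x, y) ∧ ¬ (T.deleteEdges {e}).Reachable x y) ↔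
        ¬ (T.deleteEdges {e}).Reachable a b := by
      refine ⟨fun ⟨x, y, hxy, hr⟩ => ?_, fun h => ⟨a, b, rfl, h⟩⟩
      rcases Sym2.eq_iff.mp hxy with ⟨rfl, rfl⟩ | ⟨rfl, rfl⟩
      exacts [hr, fun h => hr h.symm]
    simp only [Finset.mem_filter, Finset.mem_univ, true_and, Finset.mem_insert, hsep, hS,
      Set.mem_sdiff]
    by_cases hab : G.Adj a b
    · rw [hdual.not_reachable_deleteEdges_iff hT he hPQ hp hab]
      simp [hab]
    · have hne : s(a, b) ≠ e := fun h => hab (h ▸ edgeSet_mono hT.1 he :)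
      simp [hab, hne]
  have heS : e ∉ S := by simp [hS, he]
  rw [edgeCongestion, ← Finset.sum_filter, hcut, Finset.sum_insert heS,
    hdual.sum_map_edges_dualTree hωd hp]

/-- Edge congestion in a weighted connected planar graph, via the dual tree: for an edge
`e` of a spanning tree `T` with dual edge `e* = PQ`, the congestion of `e` equals
`ω(e)` plus the dual weight of the unique path in the dual tree joining `P` and `Q`. -/
theorem edgeCongestion_eq_dual_path {V F : Type*} [Fintype V] [DecidableEq V]
    [Fintype F] [DecidableEq F]
    (G : SimpleGraph V) (hG : G.Connected) (ω : Sym2 V → ℝ)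
    (Gd : SimpleGraph F) (d : Sym2 V → Sym2 F) (hdual : IsPlanarDual G Gd d)
    (ωd : Sym2 F → ℝ) (hωd : ∀ f ∈ G.edgeSet, ωd (d f) = ω f)
    (T : SimpleGraph V) (hT : IsSpanningTree G T)
    (e : Sym2 V) (he : e ∈ T.edgeSet)
    (P Q : F) (hPQ : d e = s(P, Q))
    (p : (dualTree G T d).Walk P Q) (hp : p.IsPath) :
    edgeCongestion G T ω e = ω e + (p.edges.map ωd).sum :=
  edgeCongestion_eq_dual_path_general G ω Gd d hdual ωd hωd T hT e he P Q hPQ p hp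
end
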